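/- arXiv:2309.06436 — 7 statements merged into one kernel-verified Lean document; each statement's English description precedes it below -/
import Mathlib

section
/- Let K be a finite group, H₁ and H₂ finite-dimensional complex inner product spaces, and u, v unitary representations of K on H₁ and H₂ respectively (group homomorphisms into the unitary operators). Define Π := |K|^{-1} Σ_{g∈K} u(g) ⊗ v(g) on H₁ ⊗ H₂. Then the following two sets of operators on H₁ ⊗ H₂ are equal: {Π (O ⊗ 1) Π : O ∈ End(H₁)} = {(O ⊗ 1) Π : O ∈ End(H₁) and (O ⊗ 1) Π = Π (O ⊗ 1)}. (That is, the gauge-invariant subregion algebra obtained by conjugating the subregion algebra with the gauge-invariance projector coincides with the set of gauge-invariance-projector multiples of subregion operators commuting with the projector.) -/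
open scoped TensorProduct InnerProductSpace

/-- for a finite group `K` acting unitarily on finite-dimensional complex inner
product spaces `H₁`, `H₂`, with the group-averaging projector
`Π = |K|⁻¹ Σ_g u(g) ⊗ v(g)` on `H₁ ⊗ H₂`, the set `{Π (O ⊗ 1) Π}` equals the set of
operators `(O ⊗ 1) Π` with `O ⊗ 1` commuting with `Π`. -/
theorem stmt2 (K : Type) [Group K] [Fintype K]
    (H₁ H₂ : Type)
    [NormedAddCommGroup H₁] [InnerProductSpace ℂ H₁] [FiniteDimensional ℂ H₁]
    [NormedAddCommGroup H₂] [InnerProductSpace ℂ H₂] [FiniteDimensional ℂ H₂]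
    (u : K →* Module.End ℂ H₁) (v : K →* Module.End ℂ H₂)
    (hu : ∀ (g : K) (x y : H₁), ⟪u g x, u g y⟫_ℂ = ⟪x, y⟫_ℂ)
    (hv : ∀ (g : K) (x y : H₂), ⟪v g x, v g y⟫_ℂ = ⟪x, y⟫_ℂ) :
    letI Pr : Module.End ℂ (H₁ ⊗[ℂ] H₂) :=
      (Fintype.card K : ℂ)⁻¹ • ∑ g : K, TensorProduct.map (u g) (v g)
    { T : Module.End ℂ (H₁ ⊗[ℂ] H₂) |
        ∃ O : Module.End ℂ H₁, T = Pr * TensorProduct.map O 1 * Pr }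
      = { T : Module.End ℂ (H₁ ⊗[ℂ] H₂) |
          ∃ O : Module.End ℂ H₁, T = TensorProduct.map O 1 * Pr ∧
            TensorProduct.map O 1 * Pr = Pr * TensorProduct.map O 1 } := by
  set c : ℂ := (Fintype.card K : ℂ)⁻¹ with hc
  set S : Module.End ℂ (H₁ ⊗[ℂ] H₂) := ∑ g : K, TensorProduct.map (u g) (v g) with hS
  set Pr : Module.End ℂ (H₁ ⊗[ℂ] H₂) := c • S with hPr
  have hcard : (Fintype.card K : ℂ) ≠ 0 := Nat.cast_ne_zero.mpr Fintype.card_ne_zero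
  -- multiplication rule for tensor maps
  have hmm : ∀ (a b : Module.End ℂ H₁) (e f : Module.End ℂ H₂),
      TensorProduct.map a e * TensorProduct.map b f = TensorProduct.map (a * b) (e * f) :=
    fun a b e f => (TensorProduct.map_mul a b e f).symm
  -- w g * S = S
  have hSl : ∀ h : K, TensorProduct.map (u h) (v h) * S = S := by
    intro h
    rw [hS, Finset.mul_sum]
    refine Fintype.sum_equiv (Equiv.mulLeft h) _ _ ?_
    intro g
    rw [hmm, ← map_mul, ← map_mul]
    simp
  -- S * w g = S
  have hSr : ∀ h : K, S * TensorProduct.map (u h) (v h) = S := by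
    intro h
    rw [hS, Finset.sum_mul]
    refine Fintype.sum_equiv (Equiv.mulRight h) _ _ ?_
    intro g
    rw [hmm, ← map_mul, ← map_mul]
    simp
  -- S is "card K"-idempotent
  have hSS : S * S = (Fintype.card K : ℂ) • S := by
    nth_rw 1 [hS]
    rw [Finset.sum_mul]
    simp only [hSl]
    rw [Finset.sum_const, Finset.card_univ, ← Nat.cast_smul_eq_nsmul ℂ]
  have hProj : Pr * Pr = Pr := by
    rw [hPr, smul_mul_assoc, mul_smul_comm, hSS, smul_smul, smul_smul]
    congr 1
    rw [hc]; field_simp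
  -- push a sum through `TensorProduct.map · 1`
  have hmapsum : ∀ (F : K → Module.End ℂ H₁),
      TensorProduct.map (c • ∑ g : K, F g) (1 : Module.End ℂ H₂)
        = c • ∑ g : K, TensorProduct.map (F g) 1 := by
    intro F
    rw [TensorProduct.map_smul_left]
    congr 1
    exact map_sum (LinearMap.rTensorHom H₂) _ _
  ext T
  simp only [Set.mem_setOf_eq]
  constructor
  · rintro ⟨O, rfl⟩
    -- the twirl of O
    refine ⟨c • ∑ g : K, u g * O * u g⁻¹, ?_, ?_⟩
    · -- Pr (O⊗1) Pr = (O'⊗1) Pr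
      have key : S * TensorProduct.map O 1 * S
          = (∑ g : K, TensorProduct.map (u g * O * u g⁻¹) 1) * S := by
        nth_rw 1 [hS]
        rw [Finset.sum_mul, Finset.sum_mul, Finset.sum_mul]
        refine Finset.sum_congr rfl ?_
        intro g _
        rw [hmm, mul_one]
        nth_rw 1 [hS]
        rw [Finset.mul_sum, Finset.mul_sum]
        refine Fintype.sum_equiv (Equiv.mulLeft g) _ _ ?_
        intro h
        rw [hmm, hmm, one_mul, mul_assoc (u g * O), ← map_mul, ← map_mul]
        simp [mul_assoc]
      rw [hmapsum, hPr]
      simp only [smul_mul_assoc, mul_smul_comm]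
      rw [key]
    · -- O' ⊗ 1 commutes with Pr
      have hw : ∀ h : K, (∑ g : K, TensorProduct.map (u g * O * u g⁻¹) 1)
          * TensorProduct.map (u h) (v h)
          = TensorProduct.map (u h) (v h) * ∑ g : K, TensorProduct.map (u g * O * u g⁻¹) 1 := by
        intro h
        rw [Finset.sum_mul, Finset.mul_sum]
        simp only [hmm, one_mul, mul_one]
        refine Fintype.sum_equiv (Equiv.mulLeft h).symm _ _ ?_
        intro g
        simp only [Equiv.mulLeft_symm, Equiv.coe_mulLeft]
        congr 1
        have h1 : u h * u (h⁻¹ * g) = u g := by rw [← map_mul, mul_inv_cancel_left]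
        have h2 : u ((h⁻¹ * g)⁻¹) = u g⁻¹ * u h := by
          rw [← map_mul]; congr 1; group
        rw [h2]
        simp only [← mul_assoc]
        rw [h1]
      have hmain : (∑ g : K, TensorProduct.map (u g * O * u g⁻¹) 1) * S
          = S * ∑ g : K, TensorProduct.map (u g * O * u g⁻¹) 1 := by
        calc (∑ g : K, TensorProduct.map (u g * O * u g⁻¹) 1) * S
            = ∑ h : K, (∑ g : K, TensorProduct.map (u g * O * u g⁻¹) 1)
                * TensorProduct.map (u h) (v h) := by rw [hS, Finset.mul_sum]
          _ = ∑ h : K, TensorProduct.map (u h) (v h)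
                * ∑ g : K, TensorProduct.map (u g * O * u g⁻¹) 1 :=
              Finset.sum_congr rfl fun h _ => hw h
          _ = S * ∑ g : K, TensorProduct.map (u g * O * u g⁻¹) 1 := by
              rw [hS, Finset.sum_mul]
      rw [hmapsum, hPr]
      simp only [smul_mul_assoc, mul_smul_comm]
      rw [hmain]
  · rintro ⟨O, rfl, hcm⟩
    refine ⟨O, ?_⟩
    rw [← hcm, mul_assoc, hProj]
end

section
/- Let K_r, K_c, K_r̄ be finite groups, H₁ and H₂ finite-dimensional complex inner product spaces. Let u be a unitary representation of K_r on H₁, let a and b be unitary representations of K_c on H₁ and H₂ respectively, and let w be a unitary representation of K_r̄ on H₂. Assume u(k) commutes with a(k') for all k ∈ K_r, k' ∈ K_c, and w(k) commutes with b(k') for all k ∈ K_r̄, k' ∈ K_c. Define Q := |K_r|^{-1} Σ_{k∈K_r} u(k), Π_r := Q ⊗ 1, Π_c := |K_c|^{-1} Σ_{k∈K_c} a(k) ⊗ b(k), Π_r̄ := 1 ⊗ (|K_r̄|^{-1} Σ_{k∈K_r̄} w(k)), and Π := Π_r Π_c Π_r̄. Then for every O ∈ End(H₁) with (O ⊗ 1)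 Π = Π (O ⊗ 1), one has (O ⊗ 1) Π = ((Q O Q) ⊗ 1) Π and ((Q O Q) ⊗ 1) Π = Π ((Q O Q) ⊗ 1). Consequently {(O ⊗ 1) Π : O ∈ End(H₁), [(O ⊗ 1), Π] = 0} = {(Ô ⊗ 1) Π : Ô ∈ End(H₁), Ô = Q Ô Q, [(Ô ⊗ 1), Π] = 0}. -/
open scoped TensorProduct InnerProductSpace

section Aux

variable {K : Type} [Group K] [Fintype K] {V : Type} [AddCommGroup V] [Module ℂ V]

private lemma avg_mul_rep (ρ : K →* Module.End ℂ V) (g : K) :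
    ((Fintype.card K : ℂ)⁻¹ • ∑ k : K, ρ k) * ρ g
      = (Fintype.card K : ℂ)⁻¹ • ∑ k : K, ρ k := by
  rw [smul_mul_assoc, Finset.sum_mul]
  congr 1
  exact Fintype.sum_equiv (Equiv.mulRight g) _ _ (fun k => by simp [← map_mul])

private lemma avg_idem (ρ : K →* Module.End ℂ V) :
    ((Fintype.card K : ℂ)⁻¹ • ∑ k : K, ρ k) * ((Fintype.card K : ℂ)⁻¹ • ∑ k : K, ρ k)
      = (Fintype.card K : ℂ)⁻¹ • ∑ k : K, ρ k := by
  rw [mul_smul_comm, Finset.mul_sum]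
  simp_rw [avg_mul_rep ρ]
  rw [Finset.sum_const, Finset.card_univ, ← Nat.cast_smul_eq_nsmul ℂ, smul_smul,
    inv_mul_cancel₀ (by exact_mod_cast Fintype.card_ne_zero), one_smul]

private lemma avg_comm (ρ : K →* Module.End ℂ V) (S : Module.End ℂ V)
    (h : ∀ k : K, ρ k * S = S * ρ k) :
    ((Fintype.card K : ℂ)⁻¹ • ∑ k : K, ρ k) * S
      = S * ((Fintype.card K : ℂ)⁻¹ • ∑ k : K, ρ k) := by
  rw [smul_mul_assoc, mul_smul_comm, Finset.sum_mul, Finset.mul_sum]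
  congr 1
  exact Finset.sum_congr rfl (fun k _ => h k)

private lemma tmap_mul {V W : Type} [AddCommGroup V] [Module ℂ V] [AddCommGroup W] [Module ℂ W]
    (f f' : Module.End ℂ V) (g g' : Module.End ℂ W) :
    TensorProduct.map f g * TensorProduct.map f' g' = TensorProduct.map (f * f') (g * g') := by
  apply TensorProduct.ext'
  intro x y
  simp [Module.End.mul_apply]

end Aux

/-- reduction of the gauge-invariant subregion algebra to partially gauged
operators. With `Q` the average of the `K_r`-representation on `H₁`, and
`Π = Π_r Π_c Π_r̄` the product of the three group-averaging projectors, every subregion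
operator `O` with `(O ⊗ 1) Π = Π (O ⊗ 1)` satisfies `(O ⊗ 1) Π = ((Q O Q) ⊗ 1) Π`, and
`(Q O Q) ⊗ 1` still commutes with `Π`; consequently the corresponding operator sets agree. -/
theorem stmt3 (Kr Kc Krbar : Type) [Group Kr] [Fintype Kr] [Group Kc] [Fintype Kc]
    [Group Krbar] [Fintype Krbar]
    (H₁ H₂ : Type)
    [NormedAddCommGroup H₁] [InnerProductSpace ℂ H₁] [FiniteDimensional ℂ H₁]
    [NormedAddCommGroup H₂] [InnerProductSpace ℂ H₂] [FiniteDimensional ℂ H₂]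
    (u : Kr →* Module.End ℂ H₁) (a : Kc →* Module.End ℂ H₁)
    (b : Kc →* Module.End ℂ H₂) (w : Krbar →* Module.End ℂ H₂)
    (hu : ∀ (g : Kr) (x y : H₁), ⟪u g x, u g y⟫_ℂ = ⟪x, y⟫_ℂ)
    (ha : ∀ (g : Kc) (x y : H₁), ⟪a g x, a g y⟫_ℂ = ⟪x, y⟫_ℂ)
    (hb : ∀ (g : Kc) (x y : H₂), ⟪b g x, b g y⟫_ℂ = ⟪x, y⟫_ℂ)
    (hw : ∀ (g : Krbar) (x y : H₂), ⟪w g x, w g y⟫_ℂ = ⟪x, y⟫_ℂ)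
    (hua : ∀ (k : Kr) (k' : Kc), u k * a k' = a k' * u k)
    (hwb : ∀ (k : Krbar) (k' : Kc), w k * b k' = b k' * w k) :
    letI Q : Module.End ℂ H₁ := (Fintype.card Kr : ℂ)⁻¹ • ∑ k : Kr, u k
    letI Pir : Module.End ℂ (H₁ ⊗[ℂ] H₂) := TensorProduct.map Q 1
    letI Pic : Module.End ℂ (H₁ ⊗[ℂ] H₂) :=
      (Fintype.card Kc : ℂ)⁻¹ • ∑ k : Kc, TensorProduct.map (a k) (b k)
    letI Pirbar : Module.End ℂ (H₁ ⊗[ℂ] H₂) :=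
      TensorProduct.map 1 ((Fintype.card Krbar : ℂ)⁻¹ • ∑ k : Krbar, w k)
    letI Pi' : Module.End ℂ (H₁ ⊗[ℂ] H₂) := Pir * Pic * Pirbar
    (∀ O : Module.End ℂ H₁, TensorProduct.map O 1 * Pi' = Pi' * TensorProduct.map O 1 →
      (TensorProduct.map O 1 * Pi' = TensorProduct.map (Q * O * Q) 1 * Pi' ∧
        TensorProduct.map (Q * O * Q) 1 * Pi' = Pi' * TensorProduct.map (Q * O * Q) 1)) ∧
    { T : Module.End ℂ (H₁ ⊗[ℂ] H₂) |
        ∃ O : Module.End ℂ H₁, T = TensorProduct.map O 1 * Pi' ∧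
          TensorProduct.map O 1 * Pi' = Pi' * TensorProduct.map O 1 }
      = { T : Module.End ℂ (H₁ ⊗[ℂ] H₂) |
          ∃ O : Module.End ℂ H₁, O = Q * O * Q ∧ T = TensorProduct.map O 1 * Pi' ∧
            TensorProduct.map O 1 * Pi' = Pi' * TensorProduct.map O 1 } := by
  set Q : Module.End ℂ H₁ := (Fintype.card Kr : ℂ)⁻¹ • ∑ k : Kr, u k with hQdef
  set Pir : Module.End ℂ (H₁ ⊗[ℂ] H₂) := TensorProduct.map Q 1 with hPir
  set Pic : Module.End ℂ (H₁ ⊗[ℂ] H₂) :=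
    (Fintype.card Kc : ℂ)⁻¹ • ∑ k : Kc, TensorProduct.map (a k) (b k) with hPic
  set Pirbar : Module.End ℂ (H₁ ⊗[ℂ] H₂) :=
    TensorProduct.map 1 ((Fintype.card Krbar : ℂ)⁻¹ • ∑ k : Krbar, w k) with hPirbar
  set Pi' : Module.End ℂ (H₁ ⊗[ℂ] H₂) := Pir * Pic * Pirbar with hPi
  -- basic algebraic facts
  have hQ2 : Q * Q = Q := by rw [hQdef]; exact avg_idem u
  have hQa : ∀ k' : Kc, Q * a k' = a k' * Q := fun k' => by
    rw [hQdef]; exact avg_comm u (a k') (fun k => hua k k')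
  have hPirPir : Pir * Pir = Pir := by
    rw [hPir, tmap_mul, hQ2, one_mul]
  have hPirPic : Pir * Pic = Pic * Pir := by
    rw [hPir, hPic, mul_smul_comm, smul_mul_assoc, Finset.mul_sum, Finset.sum_mul]
    congr 1
    refine Finset.sum_congr rfl (fun k _ => ?_)
    rw [tmap_mul, tmap_mul, hQa k, one_mul, mul_one]
  have hPirPirbar : Pir * Pirbar = Pirbar * Pir := by
    rw [hPir, hPirbar, tmap_mul, tmap_mul]
    simp [one_mul, mul_one]
  have hC1 : Pir * Pi' = Pi' := by
    rw [hPi, ← mul_assoc, ← mul_assoc, hPirPir]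
  have hC2 : Pi' * Pir = Pi' := by
    rw [hPi, mul_assoc (Pir * Pic), ← hPirPirbar, ← mul_assoc, mul_assoc Pir Pic Pir,
      ← hPirPic, ← mul_assoc, hPirPir]
  have main : ∀ O : Module.End ℂ H₁,
      TensorProduct.map O 1 * Pi' = Pi' * TensorProduct.map O 1 →
      (TensorProduct.map O 1 * Pi' = TensorProduct.map (Q * O * Q) 1 * Pi' ∧
        TensorProduct.map (Q * O * Q) 1 * Pi' = Pi' * TensorProduct.map (Q * O * Q) 1) := by
    intro O hO
    have hQOQ : TensorProduct.map (Q * O * Q) 1 = Pir * TensorProduct.map O 1 * Pir := by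
      simp only [hPir, tmap_mul, one_mul]
    have part1 : TensorProduct.map O 1 * Pi' = TensorProduct.map (Q * O * Q) 1 * Pi' := by
      rw [hQOQ, mul_assoc (Pir * TensorProduct.map O 1), hC1, mul_assoc, hO, ← mul_assoc,
        hC1]
    refine ⟨part1, ?_⟩
    rw [← part1, hO, hQOQ, ← mul_assoc, ← mul_assoc, hC2, ← hO, mul_assoc, hC2]
  refine ⟨main, ?_⟩
  ext T
  simp only [Set.mem_setOf_eq]
  constructor
  · rintro ⟨O, hT, hc⟩
    obtain ⟨h1, h2⟩ := main O hc
    have hfix : Q * (Q * O * Q) * Q = Q * O * Q := by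
      simp only [← mul_assoc]
      rw [hQ2, mul_assoc, hQ2]
    exact ⟨Q * O * Q, hfix.symm, hT.trans h1, h2⟩
  · rintro ⟨O, -, hT, hc⟩
    exact ⟨O, hT, hc⟩
end

section
/- With the setup below, let U be the unitary map from the image of Π onto ⊕_{α∈I} ℂ^{n_α} ⊗ ℂ^{n̄_α} determined by U(d_α^{-1/2} Σ_{k=1}^{d_α} |α i k⟩_r ⊗ |ᾱ j k⟩_r̄) = e_i^α ⊗ f_j^α (where e_i^α, f_j^α are the standard basis vectors of ℂ^{n_α}, ℂ^{n̄_α}). Then: (i) for every O ∈ End(H_r), the operator U ∘ (Π (O ⊗ 1) Π restricted to the image of Π) ∘ U^{-1} equals ⊕_{α∈I} M^α(O) ⊗ 1_{n̄_α}, where M^α(O) is the n_α × n_α matrix with entries M^α(O)_{ij} = (1/d_α) Σ_{k=1}^{d_α} ⟨α i k| O |α j k⟩; (ii) conversely, for every family of matrices M^α ∈ M_{n_α}(ℂ) there exists O ∈ End(H_r) with M^α(O) = M^α for all α; (iii) analogously, conjugation by U maps Ã_r̄ := {Π (1 ⊗ O') Π : O' ∈ End(H_r̄)} onto the set of operators of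 the form ⊕_{α∈I} 1_{n_α} ⊗ N^α with N^α ∈ M_{n̄_α}(ℂ). -/
open Matrix
open scoped Kronecker ComplexOrder

abbrev BIdx (I : Type) (n d : I → ℕ) : Type := Σ α : I, Fin (n α) × Fin (d α)

noncomputable def Arep {G I : Type} [Group G] [Fintype I] [DecidableEq I] {d : I → ℕ}
    (n : I → ℕ) (D : ∀ α : I, G →* Matrix.unitaryGroup (Fin (d α)) ℂ) (g : G) :
    Matrix (BIdx I n d) (BIdx I n d) ℂ :=
  Matrix.blockDiagonal' fun α =>
    (1 : Matrix (Fin (n α)) (Fin (n α)) ℂ) ⊗ₖ ((D α g : Matrix (Fin (d α)) (Fin (d α)) ℂ))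

noncomputable def Abar {G I : Type} [Group G] [Fintype I] [DecidableEq I] {d : I → ℕ}
    (nbar : I → ℕ) (D : ∀ α : I, G →* Matrix.unitaryGroup (Fin (d α)) ℂ) (g : G) :
    Matrix (BIdx I nbar d) (BIdx I nbar d) ℂ :=
  Matrix.blockDiagonal' fun α =>
    (1 : Matrix (Fin (nbar α)) (Fin (nbar α)) ℂ) ⊗ₖ
      ((D α g : Matrix (Fin (d α)) (Fin (d α)) ℂ).map (starRingEnd ℂ))

noncomputable def gaugeProj {G I : Type} [Group G] [Fintype G] [Fintype I] [DecidableEq I]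
    {d : I → ℕ} (n nbar : I → ℕ) (D : ∀ α : I, G →* Matrix.unitaryGroup (Fin (d α)) ℂ) :
    Matrix (BIdx I n d × BIdx I nbar d) (BIdx I n d × BIdx I nbar d) ℂ :=
  (Fintype.card G : ℂ)⁻¹ • ∑ g : G, (Arep n D g) ⊗ₖ (Abar nbar D g)

noncomputable def Ptilde {I : Type} [DecidableEq I] (n nbar d : I → ℕ) (α : I) :
    Matrix (BIdx I n d × BIdx I nbar d) (BIdx I n d × BIdx I nbar d) ℂ :=
  (d α : ℂ)⁻¹ • ∑ i : Fin (n α), ∑ j : Fin (nbar α), ∑ k : Fin (d α), ∑ l : Fin (d α),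
    Matrix.single (⟨α, (i, k)⟩, ⟨α, (j, k)⟩) (⟨α, (i, l)⟩, ⟨α, (j, l)⟩) 1

noncomputable def AtildeR {G I : Type} [Group G] [Fintype G] [Fintype I] [DecidableEq I]
    {d : I → ℕ} (n nbar : I → ℕ) (D : ∀ α : I, G →* Matrix.unitaryGroup (Fin (d α)) ℂ) :
    Set (Matrix (BIdx I n d × BIdx I nbar d) (BIdx I n d × BIdx I nbar d) ℂ) :=
  { T | ∃ O : Matrix (BIdx I n d) (BIdx I n d) ℂ,
      T = gaugeProj n nbar D * (O ⊗ₖ (1 : Matrix (BIdx I nbar d) (BIdx I nbar d) ℂ)) *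
        gaugeProj n nbar D }

noncomputable def AtildeRbar {G I : Type} [Group G] [Fintype G] [Fintype I] [DecidableEq I]
    {d : I → ℕ} (n nbar : I → ℕ) (D : ∀ α : I, G →* Matrix.unitaryGroup (Fin (d α)) ℂ) :
    Set (Matrix (BIdx I n d × BIdx I nbar d) (BIdx I n d × BIdx I nbar d) ℂ) :=
  { T | ∃ O : Matrix (BIdx I nbar d) (BIdx I nbar d) ℂ,
      T = gaugeProj n nbar D * ((1 : Matrix (BIdx I n d) (BIdx I n d) ℂ) ⊗ₖ O) *
        gaugeProj n nbar D }

noncomputable def tauTr {I : Type} [Fintype I] [DecidableEq I] (n nbar d : I → ℕ)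
    (T : Matrix (BIdx I n d × BIdx I nbar d) (BIdx I n d × BIdx I nbar d) ℂ) : ℂ :=
  ∑ α ∈ Finset.univ.filter (fun α => 1 ≤ nbar α),
    ((nbar α : ℂ))⁻¹ * (Ptilde n nbar d α * T).trace

/-- Standard basis vector. -/
noncomputable def eVec {X : Type} [DecidableEq X] (x : X) : X → ℂ := Pi.single x 1

/-! Let `V` be the matrix whose rows are the singlets `ψ_{αij}`. Its rows are orthonormal and the
hypothesis on `U` says `U Vᴴ = 1`; with `U Uᴴ = 1` this gives `(U - V)(U - V)ᴴ = 0`, so `U = V`.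
Since `U Π = U`, conjugating `Π X Π` by `U` is conjugating `X` by `V`, and in `V (O ⊗ 1) Vᴴ` the
identity factor pairs the two representation indices, leaving the average over `k`. -/

theorem Matrix.conj_sandwich_eq_of_mul_eq_one {R m n : Type*} [Fintype m] [Fintype n]
    [DecidableEq m] [Semiring R] {U : Matrix m n R} {W : Matrix n m R} {P : Matrix n n R}
    (hUW : U * W = 1) (hWU : W * U = P) (Y : Matrix n n R) :
    U * (P * Y * P) * W = U * Y * W := by
  subst hWU
  calc U * (W * U * Y * (W * U)) * W = (U * W) * (U * Y * W) * (U * W) := by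
        simp only [Matrix.mul_assoc]
    _ = U * Y * W := by rw [hUW, Matrix.one_mul, Matrix.mul_one]

theorem Matrix.eq_of_mul_conjTranspose_eq_one {𝕜 m n : Type*} [RCLike 𝕜] [Fintype n]
    [DecidableEq m] {U V : Matrix m n 𝕜} (hU : U * Uᴴ = 1) (hV : V * Vᴴ = 1) (hUV : U * Vᴴ = 1) :
    U = V := by
  have hVU : V * Uᴴ = 1 := by
    rw [← conjTranspose_conjTranspose V, ← conjTranspose_mul, hUV, conjTranspose_one]
  rw [← sub_eq_zero, ← self_mul_conjTranspose_eq_zero, conjTranspose_sub, Matrix.sub_mul,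
    Matrix.mul_sub, Matrix.mul_sub, hU, hV, hUV, hVU, sub_self]

section Multiplicity

variable {I : Type} [DecidableEq I] (d : I → ℕ) {m : I → ℕ}

noncomputable def multiplicityBlock (O : Matrix (BIdx I m d) (BIdx I m d) ℂ) (α : I) :
    Matrix (Fin (m α)) (Fin (m α)) ℂ :=
  fun i j => (d α : ℂ)⁻¹ * ∑ k : Fin (d α), O ⟨α, (i, k)⟩ ⟨α, (j, k)⟩

theorem multiplicityBlock_blockDiagonal'_kronecker_one {α : I} (hα : d α ≠ 0)
    (M : ∀ α : I, Matrix (Fin (m α)) (Fin (m α)) ℂ) :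
    multiplicityBlock d (blockDiagonal' fun γ => M γ ⊗ₖ (1 : Matrix (Fin (d γ)) (Fin (d γ)) ℂ)) α
      = M α := by
  ext i j
  simp [multiplicityBlock, hα]

theorem multiplicityBlock_one {α : I} (hα : d α ≠ 0) :
    multiplicityBlock d (1 : Matrix (BIdx I m d) (BIdx I m d) ℂ) α = 1 := by
  have h := multiplicityBlock_blockDiagonal'_kronecker_one d hα
    (fun γ => (1 : Matrix (Fin (m γ)) (Fin (m γ)) ℂ))
  simp only [one_kronecker_one] at h
  rwa [← Pi.one_def, blockDiagonal'_one] at h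

theorem exists_multiplicityBlock_eq (hd : ∀ α, d α ≠ 0)
    (M : ∀ α : I, Matrix (Fin (m α)) (Fin (m α)) ℂ) :
    ∃ O : Matrix (BIdx I m d) (BIdx I m d) ℂ, ∀ α, multiplicityBlock d O α = M α :=
  ⟨_, fun _ => multiplicityBlock_blockDiagonal'_kronecker_one d (hd _) M⟩

end Multiplicity

theorem inv_sqrt_mul_inv_sqrt (m : ℕ) :
    ((Real.sqrt m : ℂ))⁻¹ * ((Real.sqrt m : ℂ))⁻¹ = (m : ℂ)⁻¹ := by
  rw [← mul_inv, ← Complex.ofReal_mul, Real.mul_self_sqrt (Nat.cast_nonneg _),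
    Complex.ofReal_natCast]

section Singlet

variable {I : Type} [Fintype I] [DecidableEq I]

noncomputable def singletMatrix (n nbar d : I → ℕ) :
    Matrix (Σ α : I, Fin (n α) × Fin (nbar α)) (BIdx I n d × BIdx I nbar d) ℂ :=
  Matrix.of fun a => ((Real.sqrt (d a.1) : ℂ))⁻¹ •
    ∑ k : Fin (d a.1),
      eVec ((⟨a.1, (a.2.1, k)⟩ : BIdx I n d), (⟨a.1, (a.2.2, k)⟩ : BIdx I nbar d))

variable {n nbar d : I → ℕ}

theorem singletMatrix_mulVec_apply (v : BIdx I n d × BIdx I nbar d → ℂ)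
    (a : Σ α : I, Fin (n α) × Fin (nbar α)) :
    (singletMatrix n nbar d *ᵥ v) a
      = ((Real.sqrt (d a.1) : ℂ))⁻¹ *
          ∑ k : Fin (d a.1), v (⟨a.1, (a.2.1, k)⟩, ⟨a.1, (a.2.2, k)⟩) := by
  simp only [singletMatrix, mulVec, dotProduct, of_apply, Pi.smul_apply, Finset.sum_apply,
    smul_eq_mul, mul_assoc, ← Finset.mul_sum, Finset.sum_mul]
  rw [Finset.sum_comm]
  simp [eVec, Pi.single_apply]

omit [Fintype I] in
theorem singletMatrix_conjTranspose_apply (p : BIdx I n d × BIdx I nbar d)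
    (a : Σ α : I, Fin (n α) × Fin (nbar α)) :
    (singletMatrix n nbar d)ᴴ p a = singletMatrix n nbar d a p := by
  simp [singletMatrix, eVec, Finset.sum_apply, Pi.single_apply]

theorem singletMatrix_mul_mul_conjTranspose_apply
    (X : Matrix (BIdx I n d × BIdx I nbar d) (BIdx I n d × BIdx I nbar d) ℂ)
    (a b : Σ α : I, Fin (n α) × Fin (nbar α)) :
    (singletMatrix n nbar d * X * (singletMatrix n nbar d)ᴴ) a b
      = ((Real.sqrt (d a.1) : ℂ))⁻¹ * ((Real.sqrt (d b.1) : ℂ))⁻¹ *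
          ∑ k : Fin (d a.1), ∑ k' : Fin (d b.1),
            X (⟨a.1, (a.2.1, k)⟩, ⟨a.1, (a.2.2, k)⟩) (⟨b.1, (b.2.1, k')⟩, ⟨b.1, (b.2.2, k')⟩) := by
  have hrow : ∀ r, (singletMatrix n nbar d * X) a r
      = ((Real.sqrt (d a.1) : ℂ))⁻¹ *
          ∑ k : Fin (d a.1), X (⟨a.1, (a.2.1, k)⟩, ⟨a.1, (a.2.2, k)⟩) r :=
    fun r => singletMatrix_mulVec_apply (fun p => X p r) a
  calc _ = (singletMatrix n nbar d *ᵥ fun r => (singletMatrix n nbar d * X) a r) b := by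
        simp only [mul_apply, singletMatrix_conjTranspose_apply, mulVec, dotProduct, mul_comm]
    _ = _ := by
        rw [singletMatrix_mulVec_apply]
        simp only [hrow, Finset.mul_sum, Finset.sum_comm (γ := Fin (d b.1)), mul_left_comm,
          mul_assoc]

theorem singletMatrix_conj_kronecker_one (O : Matrix (BIdx I n d) (BIdx I n d) ℂ) :
    singletMatrix n nbar d * (O ⊗ₖ (1 : Matrix (BIdx I nbar d) (BIdx I nbar d) ℂ)) *
        (singletMatrix n nbar d)ᴴ
      = blockDiagonal' fun α =>
          multiplicityBlock d O α ⊗ₖ (1 : Matrix (Fin (nbar α)) (Fin (nbar α)) ℂ) := by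
  ext ⟨α, i, j⟩ ⟨β, i', j'⟩
  rw [singletMatrix_mul_mul_conjTranspose_apply]
  by_cases hαβ : α = β
  · subst hαβ
    by_cases hj : j = j' <;> simp [one_apply, multiplicityBlock, inv_sqrt_mul_inv_sqrt, hj]
  · rw [blockDiagonal'_apply_ne _ _ _ hαβ]
    simp [one_apply_ne, hαβ]

theorem singletMatrix_conj_one_kronecker (O : Matrix (BIdx I nbar d) (BIdx I nbar d) ℂ) :
    singletMatrix n nbar d * ((1 : Matrix (BIdx I n d) (BIdx I n d) ℂ) ⊗ₖ O) *
        (singletMatrix n nbar d)ᴴ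
      = blockDiagonal' fun α =>
          (1 : Matrix (Fin (n α)) (Fin (n α)) ℂ) ⊗ₖ multiplicityBlock d O α := by
  ext ⟨α, i, j⟩ ⟨β, i', j'⟩
  rw [singletMatrix_mul_mul_conjTranspose_apply]
  by_cases hαβ : α = β
  · subst hαβ
    by_cases hi : i = i' <;> simp [one_apply, multiplicityBlock, inv_sqrt_mul_inv_sqrt, hi]
  · rw [blockDiagonal'_apply_ne _ _ _ hαβ]
    simp [one_apply_ne, hαβ]

theorem singletMatrix_mul_conjTranspose (hd : ∀ α, d α ≠ 0) :
    singletMatrix n nbar d * (singletMatrix n nbar d)ᴴ = 1 := by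
  have h := singletMatrix_conj_kronecker_one (n := n) (nbar := nbar)
    (1 : Matrix (BIdx I n d) (BIdx I n d) ℂ)
  have h1 : ∀ α, multiplicityBlock d (1 : Matrix (BIdx I n d) (BIdx I n d) ℂ) α = 1 :=
    fun α => multiplicityBlock_one d (hd α)
  simp only [one_kronecker_one, Matrix.mul_one, h1] at h
  rwa [← Pi.one_def, blockDiagonal'_one] at h

theorem mul_singletMatrix_conjTranspose_eq_one
    {U : Matrix (Σ α : I, Fin (n α) × Fin (nbar α)) (BIdx I n d × BIdx I nbar d) ℂ}
    (hU : ∀ a, U *ᵥ singletMatrix n nbar d a = eVec a) :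
    U * (singletMatrix n nbar d)ᴴ = 1 := by
  ext b a
  have h := congrFun (hU a) b
  simp only [mulVec, dotProduct, eVec, Pi.single_apply] at h
  simp only [mul_apply, singletMatrix_conjTranspose_apply, h, one_apply]

end Singlet

theorem stmt5_general (G I : Type) [Group G] [Fintype G] [Fintype I] [DecidableEq I]
    (d : I → ℕ) (hd : ∀ α, 1 ≤ d α)
    (D : ∀ α : I, G →* Matrix.unitaryGroup (Fin (d α)) ℂ)
    (n nbar : I → ℕ)
    (U : Matrix (Σ α : I, Fin (n α) × Fin (nbar α)) (BIdx I n d × BIdx I nbar d) ℂ)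
    (hU1 : U * Uᴴ = 1)
    (hU2 : Uᴴ * U = gaugeProj n nbar D)
    (hU3 : ∀ (α : I) (i : Fin (n α)) (j : Fin (nbar α)),
      U *ᵥ (((Real.sqrt (d α) : ℂ))⁻¹ •
          ∑ k : Fin (d α),
            eVec ((⟨α, (i, k)⟩ : BIdx I n d), (⟨α, (j, k)⟩ : BIdx I nbar d)))
        = eVec (⟨α, (i, j)⟩ : Σ α : I, Fin (n α) × Fin (nbar α))) :
    -- (i) conjugation of Π (O ⊗ 1) Π gives ⊕_α M^α(O) ⊗ 1
    (∀ O : Matrix (BIdx I n d) (BIdx I n d) ℂ,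
      U * (gaugeProj n nbar D * (O ⊗ₖ (1 : Matrix (BIdx I nbar d) (BIdx I nbar d) ℂ)) *
          gaugeProj n nbar D) * Uᴴ
        = Matrix.blockDiagonal' (fun α : I =>
            ((fun i j => (d α : ℂ)⁻¹ * ∑ k : Fin (d α), O ⟨α, (i, k)⟩ ⟨α, (j, k)⟩) :
                Matrix (Fin (n α)) (Fin (n α)) ℂ) ⊗ₖ
              (1 : Matrix (Fin (nbar α)) (Fin (nbar α)) ℂ))) ∧
    -- (ii) every family of matrices M^α is realized by some O
    (∀ M : ∀ α : I, Matrix (Fin (n α)) (Fin (n α)) ℂ,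
      ∃ O : Matrix (BIdx I n d) (BIdx I n d) ℂ, ∀ (α : I) (i j : Fin (n α)),
        (d α : ℂ)⁻¹ * ∑ k : Fin (d α), O ⟨α, (i, k)⟩ ⟨α, (j, k)⟩ = M α i j) ∧
    -- (iii) conjugation maps Ã_r̄ onto the operators ⊕_α 1 ⊗ N^α
    ((fun T => U * T * Uᴴ) '' AtildeRbar n nbar D
      = { S | ∃ N : ∀ α : I, Matrix (Fin (nbar α)) (Fin (nbar α)) ℂ,
          S = Matrix.blockDiagonal' (fun α : I =>
            (1 : Matrix (Fin (n α)) (Fin (n α)) ℂ) ⊗ₖ N α) }) := by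
  have hd₀ : ∀ α, d α ≠ 0 := fun α => Nat.one_le_iff_ne_zero.mp (hd α)
  have hUV : U = singletMatrix n nbar d :=
    eq_of_mul_conjTranspose_eq_one hU1 (singletMatrix_mul_conjTranspose hd₀)
      (mul_singletMatrix_conjTranspose_eq_one fun ⟨α, i, j⟩ => hU3 α i j)
  have hconj : ∀ Y, U * (gaugeProj n nbar D * Y * gaugeProj n nbar D) * Uᴴ
      = singletMatrix n nbar d * Y * (singletMatrix n nbar d)ᴴ := fun Y => by
    rw [conj_sandwich_eq_of_mul_eq_one hU1 hU2, hUV]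
  refine ⟨fun O => by rw [hconj]; exact singletMatrix_conj_kronecker_one O, fun M => ?_, ?_⟩
  · obtain ⟨O, hO⟩ := exists_multiplicityBlock_eq d hd₀ M
    exact ⟨O, fun α i j => congrFun (congrFun (hO α) i) j⟩
  ext S
  constructor
  · rintro ⟨_, ⟨O', rfl⟩, rfl⟩
    exact ⟨multiplicityBlock d O', hconj _ |>.trans (singletMatrix_conj_one_kronecker O')⟩
  · rintro ⟨N, rfl⟩
    obtain ⟨O', hO'⟩ := exists_multiplicityBlock_eq d hd₀ N
    refine ⟨_, ⟨O', rfl⟩, (hconj _).trans ?_⟩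
    simp only [singletMatrix_conj_one_kronecker, hO']

/-- the unitary `U` from the image of `Π` onto `⊕_α ℂ^{n_α} ⊗ ℂ^{n̄_α}`
(determined by `U ψ_{αij} = e_i^α ⊗ f_j^α`, encoded by `U Uᴴ = 1`, `Uᴴ U = Π` and the
action on the `ψ_{αij}`) conjugates `Ã_r` onto block-diagonal operators `⊕_α M^α ⊗ 1`
with `M^α(O)_{ij} = d_α⁻¹ Σ_k ⟨αik|O|αjk⟩`, every family `M^α` is attained, and it
conjugates `Ã_r̄` onto the operators `⊕_α 1 ⊗ N^α`. -/
theorem stmt5 (G I : Type) [Group G] [Fintype G] [Fintype I] [DecidableEq I]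
    (d : I → ℕ) (hd : ∀ α, 1 ≤ d α)
    (D : ∀ α : I, G →* Matrix.unitaryGroup (Fin (d α)) ℂ)
    (hirr : ∀ α (W : Submodule ℂ (Fin (d α) → ℂ)),
      (∀ g : G, ∀ x ∈ W, (D α g : Matrix (Fin (d α)) (Fin (d α)) ℂ) *ᵥ x ∈ W) →
      W = ⊥ ∨ W = ⊤)
    (hnoniso : ∀ α β, α ≠ β → ∀ F : Matrix (Fin (d α)) (Fin (d β)) ℂ,
      (∀ g : G, (D α g : Matrix (Fin (d α)) (Fin (d α)) ℂ) * F
          = F * (D β g : Matrix (Fin (d β)) (Fin (d β)) ℂ)) → F = 0)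
    (n nbar : I → ℕ)
    (U : Matrix (Σ α : I, Fin (n α) × Fin (nbar α)) (BIdx I n d × BIdx I nbar d) ℂ)
    (hU1 : U * Uᴴ = 1)
    (hU2 : Uᴴ * U = gaugeProj n nbar D)
    (hU3 : ∀ (α : I) (i : Fin (n α)) (j : Fin (nbar α)),
      U *ᵥ (((Real.sqrt (d α) : ℂ))⁻¹ •
          ∑ k : Fin (d α),
            eVec ((⟨α, (i, k)⟩ : BIdx I n d), (⟨α, (j, k)⟩ : BIdx I nbar d)))
        = eVec (⟨α, (i, j)⟩ : Σ α : I, Fin (n α) × Fin (nbar α))) :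
    -- (i) conjugation of Π (O ⊗ 1) Π gives ⊕_α M^α(O) ⊗ 1
    (∀ O : Matrix (BIdx I n d) (BIdx I n d) ℂ,
      U * (gaugeProj n nbar D * (O ⊗ₖ (1 : Matrix (BIdx I nbar d) (BIdx I nbar d) ℂ)) *
          gaugeProj n nbar D) * Uᴴ
        = Matrix.blockDiagonal' (fun α : I =>
            ((fun i j => (d α : ℂ)⁻¹ * ∑ k : Fin (d α), O ⟨α, (i, k)⟩ ⟨α, (j, k)⟩) :
                Matrix (Fin (n α)) (Fin (n α)) ℂ) ⊗ₖ
              (1 : Matrix (Fin (nbar α)) (Fin (nbar α)) ℂ))) ∧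
    -- (ii) every family of matrices M^α is realized by some O
    (∀ M : ∀ α : I, Matrix (Fin (n α)) (Fin (n α)) ℂ,
      ∃ O : Matrix (BIdx I n d) (BIdx I n d) ℂ, ∀ (α : I) (i j : Fin (n α)),
        (d α : ℂ)⁻¹ * ∑ k : Fin (d α), O ⟨α, (i, k)⟩ ⟨α, (j, k)⟩ = M α i j) ∧
    -- (iii) conjugation maps Ã_r̄ onto the operators ⊕_α 1 ⊗ N^α
    ((fun T => U * T * Uᴴ) '' AtildeRbar n nbar D
      = { S | ∃ N : ∀ α : I, Matrix (Fin (nbar α)) (Fin (nbar α)) ℂ,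
          S = Matrix.blockDiagonal' (fun α : I =>
            (1 : Matrix (Fin (n α)) (Fin (n α)) ℂ) ⊗ₖ N α) }) :=
  stmt5_general G I d hd D n nbar U hU1 hU2 hU3
end

section
/- With the setup below, the center of the gauge-invariant subregion algebra is spanned by the superselection-sector projections: an operator T on H belongs to both Ã_r := {Π (O ⊗ 1) Π : O ∈ End(H_r)} and Ã_r̄ := {Π (1 ⊗ O') Π : O' ∈ End(H_r̄)} if and only if T is a complex linear combination of the operators P̃^α := (1/d_α) Σ_{1≤i≤n_α} Σ_{1≤j≤n̄_α} Σ_{1≤k,ℓ≤d_α} |α i k⟩_r⟨α i ℓ| ⊗ |ᾱ j k⟩_r̄⟨ᾱ j ℓ| over α ∈ I. Equivalently, Ã_r ∩ Ã_r̄ = span_ℂ{P̃^α : α ∈ I}. -/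
open Matrix
open scoped Kronecker ComplexOrder

/-!
By Schur orthogonality the gauge projector is `Π = V W V†`, where the columns of `V` are the
gauge singlets `∑ₖ |α i k⟩_r ⊗ |ᾱ j k⟩_r̄`, labelled by `(α, i, j)`, and `W = diag (1 / d_α)`.
Hence `Π M Π = V (W (V† M V) W) V†`, and `X ↦ V X V†` is injective because every `d_α ≥ 1`.
Compressing `O ⊗ 1` gives a matrix in the labels `(α, i, j)` that is diagonal in `j` with
diagonal entries independent of `j`; compressing `1 ⊗ O'` gives one diagonal in `i` with entries
independent of `i`. If the two agree, the result is diagonal with entries depending on `α` alone,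
and these are exactly the combinations of the `P̃^α`, which is `V W V†` with `W` cut down to the
labels of sector `α`.
-/

lemma Matrix.exists_eq_diagonal_comp_fst {ι R : Type*} {β : ι → Type*} [DecidableEq (Sigma β)]
    [Zero R] (A : Matrix (Sigma β) (Sigma β) R) (hoff : ∀ x y, x ≠ y → A x y = 0)
    (hdiag : ∀ x y : Sigma β, x.1 = y.1 → A x x = A y y) :
    ∃ c : ι → R, A = diagonal fun x => c x.1 := by
  classical
  refine ⟨fun a => if h : ∃ x : Sigma β, x.1 = a then A h.choose h.choose else 0, ?_⟩
  ext x y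
  by_cases hxy : x = y
  · have hx : ∃ y : Sigma β, y.1 = x.1 := ⟨x, rfl⟩
    rw [← hxy, diagonal_apply_eq]
    dsimp only
    rw [dif_pos hx]
    exact (hdiag _ _ hx.choose_spec).symm
  · rw [diagonal_apply_ne _ hxy, hoff x y hxy]

lemma Matrix.eq_of_diagonal_mul_mul_diagonal_eq {ι K : Type*} [Fintype ι] [DecidableEq ι] [Field K]
    {w : ι → K} (hw : ∀ i, w i ≠ 0) {A B : Matrix ι ι K}
    (h : diagonal w * A * diagonal w = diagonal w * B * diagonal w) : A = B := by
  ext i j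
  simpa [diagonal_mul, mul_diagonal, hw] using congrFun₂ h i j

section Schur

variable {G m m' : Type*} [Group G] [Fintype m] [DecidableEq m] [Fintype m'] [DecidableEq m']
  (ρ : G →* unitaryGroup m ℂ) (σ : G →* unitaryGroup m' ℂ)

lemma exists_eq_smul_one_of_commute
    (hirr : ∀ W : Submodule ℂ (m → ℂ),
      (∀ g : G, ∀ x ∈ W, (ρ g : Matrix m m ℂ) *ᵥ x ∈ W) → W = ⊥ ∨ W = ⊤)
    (F : Matrix m m ℂ) (hF : ∀ g : G, (ρ g : Matrix m m ℂ) * F = F * (ρ g : Matrix m m ℂ)) :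
    ∃ μ : ℂ, F = μ • 1 := by
  cases isEmpty_or_nonempty m
  · exact ⟨0, Subsingleton.elim _ _⟩
  obtain ⟨μ, hμ⟩ := Module.End.exists_eigenvalue (Matrix.mulVecLin F)
  have hinv : ∀ g : G, ∀ x ∈ Module.End.eigenspace (Matrix.mulVecLin F) μ,
      (ρ g : Matrix m m ℂ) *ᵥ x ∈ Module.End.eigenspace (Matrix.mulVecLin F) μ := by
    intro g x hx
    rw [Module.End.mem_eigenspace_iff, Matrix.mulVecLin_apply] at hx ⊢
    rw [Matrix.mulVec_mulVec, ← hF g, ← Matrix.mulVec_mulVec, hx, Matrix.mulVec_smul]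
  have htop := (hirr _ hinv).resolve_left hμ
  refine ⟨μ, ext fun i j => ?_⟩
  have hj : F *ᵥ Pi.single j 1 = μ • Pi.single j 1 := by
    rw [← Matrix.mulVecLin_apply, ← Module.End.mem_eigenspace_iff, htop]; trivial
  simpa [Matrix.one_apply, Pi.single_apply, eq_comm] using congrFun hj i

variable [Fintype G]

noncomputable def twirl (X : Matrix m m' ℂ) : Matrix m m' ℂ :=
  (Fintype.card G : ℂ)⁻¹ • ∑ g : G, (ρ g : Matrix m m ℂ) * X * (σ g⁻¹ : Matrix m' m' ℂ)

lemma mul_twirl (X : Matrix m m' ℂ) (h : G) :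
    (ρ h : Matrix m m ℂ) * twirl ρ σ X = twirl ρ σ X * (σ h : Matrix m' m' ℂ) := by
  simp only [twirl, Matrix.mul_smul, Matrix.smul_mul, Matrix.mul_sum, Matrix.sum_mul]
  congr 1
  refine Fintype.sum_bijective (h * ·) (Group.mulLeft_bijective h) _ _ fun g => ?_
  simp only [← Matrix.mul_assoc, ← Submonoid.coe_mul, ← map_mul]
  rw [Matrix.mul_assoc _ (σ (h * g)⁻¹ : Matrix m' m' ℂ), ← Submonoid.coe_mul, ← map_mul]
  simp

lemma trace_twirl_self (X : Matrix m m ℂ) : (twirl ρ ρ X).trace = X.trace := by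
  have hG : (Fintype.card G : ℂ) ≠ 0 := Nat.cast_ne_zero.mpr Fintype.card_ne_zero
  simp only [twirl, trace_smul, trace_sum, trace_mul_cycle _ X, ← Submonoid.coe_mul, ← map_mul,
    inv_mul_cancel, map_one]
  simp [hG]

lemma twirl_single_apply (k k' : m) (l l' : m') :
    twirl ρ σ (single k' l' 1) k l
      = (Fintype.card G : ℂ)⁻¹ * ∑ g : G,
          (ρ g : Matrix m m ℂ) k k' * star ((σ g : Matrix m' m' ℂ) l l') := by
  simp [twirl, Matrix.sum_apply, Matrix.mul_apply, single_apply, map_inv,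
    UnitaryGroup.inv_val, Matrix.star_apply, ite_and]

theorem schur_orthogonality_of_not_intertwined
    (hne : ∀ F : Matrix m m' ℂ,
      (∀ g : G, (ρ g : Matrix m m ℂ) * F = F * (σ g : Matrix m' m' ℂ)) → F = 0)
    (k k' : m) (l l' : m') :
    (Fintype.card G : ℂ)⁻¹ * ∑ g : G,
      (ρ g : Matrix m m ℂ) k k' * star ((σ g : Matrix m' m' ℂ) l l') = 0 := by
  rw [← twirl_single_apply, hne _ (mul_twirl ρ σ _)]
  rfl

theorem schur_orthogonality
    (hirr : ∀ W : Submodule ℂ (m → ℂ),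
      (∀ g : G, ∀ x ∈ W, (ρ g : Matrix m m ℂ) *ᵥ x ∈ W) → W = ⊥ ∨ W = ⊤)
    (k k' l l' : m) :
    (Fintype.card G : ℂ)⁻¹ * ∑ g : G,
      (ρ g : Matrix m m ℂ) k k' * star ((ρ g : Matrix m m ℂ) l l')
      = if k = l ∧ k' = l' then (Fintype.card m : ℂ)⁻¹ else 0 := by
  obtain ⟨μ, hμ⟩ := exists_eq_smul_one_of_commute ρ hirr _ (mul_twirl ρ ρ (single k' l' 1))
  have htrace := trace_twirl_self ρ (single k' l' 1)
  rw [hμ, trace_smul, trace_one, smul_eq_mul] at htrace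
  have : Nonempty m := ⟨k⟩
  have hm : (Fintype.card m : ℂ) ≠ 0 := Nat.cast_ne_zero.mpr Fintype.card_ne_zero
  rw [← twirl_single_apply, hμ, Matrix.smul_apply, one_apply, smul_eq_mul]
  by_cases hkl' : k' = l'
  · rw [hkl', trace_single_eq_same, ← eq_mul_inv_iff_mul_eq₀ hm, one_mul] at htrace
    simp [hkl', htrace]
  · rw [trace_single_eq_of_ne _ _ _ hkl', mul_eq_zero] at htrace
    simp [hkl', htrace.resolve_right hm]

end Schur

section Singlets

variable {I : Type} {n nbar : I → ℕ} (d : I → ℕ)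

def singletIdx (κ : BIdx I n nbar) (k : Fin (d κ.1)) : BIdx I n d × BIdx I nbar d :=
  (⟨κ.1, (κ.2.1, k)⟩, ⟨κ.1, (κ.2.2, k)⟩)

variable {d}

lemma eq_of_singletIdx_eq {κ κ' : BIdx I n nbar} {k : Fin (d κ.1)} {l : Fin (d κ'.1)}
    (h : singletIdx d κ k = singletIdx d κ' l) : κ = κ' := by
  obtain ⟨α, i, j⟩ := κ
  obtain ⟨α', i', j'⟩ := κ'
  simp only [singletIdx, Prod.mk.injEq, Sigma.mk.inj_iff] at h
  obtain ⟨⟨rfl, hik⟩, -, hjk⟩ := h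
  simp_all [Prod.ext_iff]

lemma singletIdx_injective (κ : BIdx I n nbar) : Function.Injective (singletIdx d κ) := by
  intro k l h
  simpa [singletIdx] using h

variable [DecidableEq I]

variable (n nbar d) in
/-- Column `⟨α, (i, j)⟩` is the unnormalised gauge singlet `∑ₖ |α i k⟩_r ⊗ |ᾱ j k⟩_r̄`. -/
noncomputable def singlets : Matrix (BIdx I n d × BIdx I nbar d) (BIdx I n nbar) ℂ :=
  Matrix.of fun p κ => ∑ k : Fin (d κ.1), if p = singletIdx d κ k then 1 else 0

lemma singlets_apply_singletIdx (κ : BIdx I n nbar) (k : Fin (d κ.1)) (κ' : BIdx I n nbar) :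
    singlets n nbar d (singletIdx d κ k) κ' = if κ = κ' then 1 else 0 := by
  rw [singlets, of_apply]
  split_ifs with h
  · subst h
    simp only [(singletIdx_injective κ).eq_iff, Finset.sum_ite_eq, Finset.mem_univ, if_true]
  · exact Finset.sum_eq_zero fun l _ => if_neg fun hkl => h (eq_of_singletIdx_eq hkl)

lemma singlets_apply_eq_zero {p : BIdx I n d × BIdx I nbar d}
    (hp : ∀ κ k, p ≠ singletIdx d κ k) (κ : BIdx I n nbar) : singlets n nbar d p κ = 0 := by
  rw [singlets, of_apply]
  exact Finset.sum_eq_zero fun k _ => if_neg (hp κ k)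

lemma conjTranspose_singlets_apply (κ : BIdx I n nbar) (p : BIdx I n d × BIdx I nbar d) :
    (singlets n nbar d)ᴴ κ p = singlets n nbar d p κ := by
  simp [singlets]

variable [Fintype I] {β : Type*}

lemma mul_singlets_apply (M : Matrix β (BIdx I n d × BIdx I nbar d) ℂ) (b : β)
    (κ : BIdx I n nbar) : (M * singlets n nbar d) b κ = ∑ k, M b (singletIdx d κ k) := by
  simp only [Matrix.mul_apply, singlets, of_apply, Finset.mul_sum, mul_ite, mul_one, mul_zero]
  rw [Finset.sum_comm]
  simp only [Finset.sum_ite_eq', Finset.mem_univ, if_true]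

lemma conjTranspose_singlets_mul_apply (M : Matrix (BIdx I n d × BIdx I nbar d) β ℂ)
    (κ : BIdx I n nbar) (b : β) :
    ((singlets n nbar d)ᴴ * M) κ b = ∑ k, M (singletIdx d κ k) b := by
  simp only [Matrix.mul_apply, conjTranspose_singlets_apply]
  simp only [singlets, of_apply, Finset.sum_mul, ite_mul, one_mul, zero_mul]
  rw [Finset.sum_comm]
  simp only [Finset.sum_ite_eq', Finset.mem_univ, if_true]

lemma singlets_mul_apply_singletIdx (Y : Matrix (BIdx I n nbar) β ℂ) (κ : BIdx I n nbar)
    (k : Fin (d κ.1)) (b : β) : (singlets n nbar d * Y) (singletIdx d κ k) b = Y κ b := by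
  simp only [Matrix.mul_apply, singlets_apply_singletIdx, ite_mul, one_mul, zero_mul,
    Finset.sum_ite_eq, Finset.mem_univ, if_true]

lemma mul_conjTranspose_singlets_apply_singletIdx (Y : Matrix β (BIdx I n nbar) ℂ) (b : β)
    (κ : BIdx I n nbar) (k : Fin (d κ.1)) :
    (Y * (singlets n nbar d)ᴴ) b (singletIdx d κ k) = Y b κ := by
  simp only [Matrix.mul_apply, conjTranspose_singlets_apply, singlets_apply_singletIdx, mul_ite,
    mul_one, mul_zero, Finset.sum_ite_eq, Finset.mem_univ, if_true]

lemma singlets_mul_mul_conjTranspose_apply_singletIdx (X : Matrix (BIdx I n nbar) (BIdx I n nbar) ℂ)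
    (κ κ' : BIdx I n nbar) (k : Fin (d κ.1)) (l : Fin (d κ'.1)) :
    (singlets n nbar d * X * (singlets n nbar d)ᴴ) (singletIdx d κ k) (singletIdx d κ' l)
      = X κ κ' := by
  rw [mul_conjTranspose_singlets_apply_singletIdx, singlets_mul_apply_singletIdx]

lemma singlets_mul_mul_conjTranspose_apply_eq_zero (X : Matrix (BIdx I n nbar) (BIdx I n nbar) ℂ)
    {p q : BIdx I n d × BIdx I nbar d}
    (h : (∀ κ k, p ≠ singletIdx d κ k) ∨ (∀ κ k, q ≠ singletIdx d κ k)) :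
    (singlets n nbar d * X * (singlets n nbar d)ᴴ) p q = 0 := by
  rw [Matrix.mul_assoc, Matrix.mul_apply]
  refine Finset.sum_eq_zero fun κ _ => ?_
  rcases h with hp | hq
  · rw [singlets_apply_eq_zero hp, zero_mul]
  · rw [Matrix.mul_apply, Finset.sum_eq_zero fun κ' _ => ?_, mul_zero]
    rw [conjTranspose_singlets_apply, singlets_apply_eq_zero hq, mul_zero]

lemma singlets_conj_injective (hd : ∀ α, 1 ≤ d α) {X Y : Matrix (BIdx I n nbar) (BIdx I n nbar) ℂ}
    (h : singlets n nbar d * X * (singlets n nbar d)ᴴ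
      = singlets n nbar d * Y * (singlets n nbar d)ᴴ) :
    X = Y := by
  ext κ κ'
  have := congrFun₂ h (singletIdx d κ ⟨0, hd κ.1⟩) (singletIdx d κ' ⟨0, hd κ'.1⟩)
  rwa [singlets_mul_mul_conjTranspose_apply_singletIdx,
    singlets_mul_mul_conjTranspose_apply_singletIdx] at this

noncomputable def singletBlock
    (M : Matrix (BIdx I n d × BIdx I nbar d) (BIdx I n d × BIdx I nbar d) ℂ) :
    Matrix (BIdx I n nbar) (BIdx I n nbar) ℂ :=
  (singlets n nbar d)ᴴ * M * singlets n nbar d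

lemma singletBlock_apply
    (M : Matrix (BIdx I n d × BIdx I nbar d) (BIdx I n d × BIdx I nbar d) ℂ)
    (κ κ' : BIdx I n nbar) :
    singletBlock M κ κ' = ∑ k, ∑ l, M (singletIdx d κ k) (singletIdx d κ' l) := by
  simp only [singletBlock, mul_singlets_apply, conjTranspose_singlets_mul_apply]
  exact Finset.sum_comm

lemma singletBlock_diagonal (h : BIdx I n d × BIdx I nbar d → ℂ) :
    singletBlock (diagonal h) = diagonal fun κ : BIdx I n nbar => ∑ k, h (singletIdx d κ k) := by
  ext κ κ'
  simp only [singletBlock, Matrix.mul_assoc, conjTranspose_singlets_mul_apply, diagonal_mul,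
    singlets_apply_singletIdx, diagonal_apply, mul_ite, mul_one, mul_zero]
  split_ifs <;> simp

lemma singlets_mul_diagonal_mul_conjTranspose (x : BIdx I n nbar → ℂ) :
    singlets n nbar d * diagonal x * (singlets n nbar d)ᴴ
      = ∑ κ, x κ • ∑ k, ∑ l, single (singletIdx d κ k) (singletIdx d κ l) 1 := by
  ext p q
  simp only [Matrix.mul_apply, diagonal_apply, conjTranspose_singlets_apply, Matrix.sum_apply,
    Matrix.smul_apply, single_apply]
  simp only [singlets, of_apply, mul_ite, mul_zero, Finset.sum_ite_eq', Finset.mem_univ, if_true]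
  refine Finset.sum_congr rfl fun κ _ => ?_
  rw [mul_comm _ (x κ), mul_assoc, smul_eq_mul, Finset.sum_mul_sum]
  simp only [eq_comm (a := p), eq_comm (a := q), ite_zero_mul_ite_zero, mul_one]

variable (n nbar d) in
noncomputable def singletProj :
    Matrix (BIdx I n d × BIdx I nbar d) (BIdx I n d × BIdx I nbar d) ℂ :=
  singlets n nbar d * diagonal (fun κ : BIdx I n nbar => (d κ.1 : ℂ)⁻¹) * (singlets n nbar d)ᴴ

lemma singletProj_apply_singletIdx (κ κ' : BIdx I n nbar) (k : Fin (d κ.1)) (l : Fin (d κ'.1)) :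
    singletProj n nbar d (singletIdx d κ k) (singletIdx d κ' l)
      = if κ = κ' then (d κ.1 : ℂ)⁻¹ else 0 := by
  rw [singletProj, singlets_mul_mul_conjTranspose_apply_singletIdx, diagonal_apply]

lemma singletProj_apply_eq_zero {p q : BIdx I n d × BIdx I nbar d}
    (h : (∀ κ k, p ≠ singletIdx d κ k) ∨ (∀ κ k, q ≠ singletIdx d κ k)) :
    singletProj n nbar d p q = 0 :=
  singlets_mul_mul_conjTranspose_apply_eq_zero _ h

lemma singletProj_mul_mul_singletProj
    (M : Matrix (BIdx I n d × BIdx I nbar d) (BIdx I n d × BIdx I nbar d) ℂ) :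
    singletProj n nbar d * M * singletProj n nbar d
      = singlets n nbar d * (diagonal (fun κ : BIdx I n nbar => (d κ.1 : ℂ)⁻¹)
          * singletBlock M * diagonal (fun κ : BIdx I n nbar => (d κ.1 : ℂ)⁻¹))
        * (singlets n nbar d)ᴴ := by
  simp only [singletProj, singletBlock, Matrix.mul_assoc]

end Singlets

section GaugeProj

variable {G I : Type} [Group G] [Fintype G] [Fintype I] [DecidableEq I] {d : I → ℕ}
  {n nbar : I → ℕ} {D : ∀ α : I, G →* unitaryGroup (Fin (d α)) ℂ}

lemma gaugeProj_apply_mk (α β : I) (i i' : Fin (n α)) (k k' : Fin (d α)) (j j' : Fin (nbar β))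
    (l l' : Fin (d β)) :
    gaugeProj n nbar D (⟨α, (i, k)⟩, ⟨β, (j, l)⟩) (⟨α, (i', k')⟩, ⟨β, (j', l')⟩)
      = if i = i' ∧ j = j' then (Fintype.card G : ℂ)⁻¹ * ∑ g : G,
          (D α g : Matrix (Fin (d α)) (Fin (d α)) ℂ) k k'
            * star ((D β g : Matrix (Fin (d β)) (Fin (d β)) ℂ) l l') else 0 := by
  simp only [gaugeProj, Arep, Abar, Matrix.smul_apply, Matrix.sum_apply, kronecker_apply,
    blockDiagonal'_apply_eq, one_apply, map_apply, starRingEnd_apply, smul_eq_mul]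
  split_ifs <;> simp_all

lemma gaugeProj_apply_eq_zero_of_ne {p q : BIdx I n d × BIdx I nbar d}
    (h : p.1.1 ≠ q.1.1 ∨ p.2.1 ≠ q.2.1) : gaugeProj n nbar D p q = 0 := by
  obtain ⟨⟨α, ik⟩, ⟨β, jl⟩⟩ := p
  obtain ⟨⟨α', ik'⟩, ⟨β', jl'⟩⟩ := q
  refine (Matrix.smul_apply _ _ _ _).trans ?_
  rw [Matrix.sum_apply, Finset.sum_eq_zero fun g _ => ?_, smul_zero]
  rw [kronecker_apply]
  rcases h with h | h
  · rw [Arep, blockDiagonal'_apply_ne _ _ _ h, zero_mul]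
  · rw [Abar, blockDiagonal'_apply_ne _ _ _ h, mul_zero]

lemma gaugeProj_apply_singletIdx
    (hirr : ∀ α (W : Submodule ℂ (Fin (d α) → ℂ)),
      (∀ g : G, ∀ x ∈ W, (D α g : Matrix (Fin (d α)) (Fin (d α)) ℂ) *ᵥ x ∈ W) → W = ⊥ ∨ W = ⊤)
    (κ κ' : BIdx I n nbar) (k : Fin (d κ.1)) (l : Fin (d κ'.1)) :
    gaugeProj n nbar D (singletIdx d κ k) (singletIdx d κ' l)
      = if κ = κ' then (d κ.1 : ℂ)⁻¹ else 0 := by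
  obtain ⟨α, i, j⟩ := κ
  obtain ⟨α', i', j'⟩ := κ'
  by_cases hα : α = α'
  · subst hα
    rw [singletIdx, singletIdx, gaugeProj_apply_mk, schur_orthogonality (D α) (hirr α)]
    simp [Fintype.card_fin]
  · rw [gaugeProj_apply_eq_zero_of_ne (Or.inl hα), if_neg fun h => hα (congrArg Sigma.fst h)]

lemma gaugeProj_apply_eq_zero
    (hirr : ∀ α (W : Submodule ℂ (Fin (d α) → ℂ)),
      (∀ g : G, ∀ x ∈ W, (D α g : Matrix (Fin (d α)) (Fin (d α)) ℂ) *ᵥ x ∈ W) → W = ⊥ ∨ W = ⊤)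
    (hnoniso : ∀ α β, α ≠ β → ∀ F : Matrix (Fin (d α)) (Fin (d β)) ℂ,
      (∀ g : G, (D α g : Matrix (Fin (d α)) (Fin (d α)) ℂ) * F
          = F * (D β g : Matrix (Fin (d β)) (Fin (d β)) ℂ)) → F = 0)
    {p q : BIdx I n d × BIdx I nbar d}
    (h : (∀ κ k, p ≠ singletIdx d κ k) ∨ (∀ κ k, q ≠ singletIdx d κ k)) :
    gaugeProj n nbar D p q = 0 := by
  obtain ⟨⟨α, i, k⟩, ⟨β, j, l⟩⟩ := p
  obtain ⟨⟨α', i', k'⟩, ⟨β', j', l'⟩⟩ := q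
  by_cases hα : α = α'
  swap; · exact gaugeProj_apply_eq_zero_of_ne (Or.inl hα)
  by_cases hβ : β = β'
  swap; · exact gaugeProj_apply_eq_zero_of_ne (Or.inr hβ)
  subst hα hβ
  rw [gaugeProj_apply_mk]
  rcases eq_or_ne α β with rfl | hαβ
  · have hkl : ¬(k = l ∧ k' = l') := by
      rintro ⟨rfl, rfl⟩
      rcases h with h | h
      exacts [h ⟨α, (i, j)⟩ k rfl, h ⟨α, (i', j')⟩ k' rfl]
    rw [schur_orthogonality (D α) (hirr α), if_neg hkl, ite_self]
  · rw [schur_orthogonality_of_not_intertwined (D α) (D β) (hnoniso α β hαβ), ite_self]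

theorem gaugeProj_eq_singletProj
    (hirr : ∀ α (W : Submodule ℂ (Fin (d α) → ℂ)),
      (∀ g : G, ∀ x ∈ W, (D α g : Matrix (Fin (d α)) (Fin (d α)) ℂ) *ᵥ x ∈ W) → W = ⊥ ∨ W = ⊤)
    (hnoniso : ∀ α β, α ≠ β → ∀ F : Matrix (Fin (d α)) (Fin (d β)) ℂ,
      (∀ g : G, (D α g : Matrix (Fin (d α)) (Fin (d α)) ℂ) * F
          = F * (D β g : Matrix (Fin (d β)) (Fin (d β)) ℂ)) → F = 0) :
    gaugeProj n nbar D = singletProj n nbar d := by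
  ext p q
  by_cases h : (∃ κ k, p = singletIdx d κ k) ∧ (∃ κ k, q = singletIdx d κ k)
  · obtain ⟨⟨κ, k, rfl⟩, ⟨κ', l, rfl⟩⟩ := h
    rw [gaugeProj_apply_singletIdx hirr, singletProj_apply_singletIdx]
  · simp only [not_and_or, not_exists] at h
    rw [gaugeProj_apply_eq_zero hirr hnoniso h, singletProj_apply_eq_zero h]

end GaugeProj

section Center

variable {I : Type} [Fintype I] [DecidableEq I] {n nbar d : I → ℕ}

lemma singletBlock_kronecker_one_apply_of_ne
    (O : Matrix (BIdx I n d) (BIdx I n d) ℂ) {κ κ' : BIdx I n nbar}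
    (h : (⟨κ.1, κ.2.2⟩ : Σ α, Fin (nbar α)) ≠ ⟨κ'.1, κ'.2.2⟩) :
    singletBlock (O ⊗ₖ (1 : Matrix (BIdx I nbar d) (BIdx I nbar d) ℂ)) κ κ' = 0 := by
  rw [singletBlock_apply]
  refine Finset.sum_eq_zero fun k _ => Finset.sum_eq_zero fun l _ => ?_
  rw [singletIdx, singletIdx, kronecker_apply, one_apply_ne, mul_zero]
  exact fun hkl => h (congrArg (fun r : BIdx I nbar d => (⟨r.1, r.2.1⟩ : Σ α, Fin (nbar α))) hkl)

lemma singletBlock_one_kronecker_apply_of_ne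
    (O : Matrix (BIdx I nbar d) (BIdx I nbar d) ℂ) {κ κ' : BIdx I n nbar}
    (h : (⟨κ.1, κ.2.1⟩ : Σ α, Fin (n α)) ≠ ⟨κ'.1, κ'.2.1⟩) :
    singletBlock ((1 : Matrix (BIdx I n d) (BIdx I n d) ℂ) ⊗ₖ O) κ κ' = 0 := by
  rw [singletBlock_apply]
  refine Finset.sum_eq_zero fun k _ => Finset.sum_eq_zero fun l _ => ?_
  rw [singletIdx, singletIdx, kronecker_apply, one_apply_ne, zero_mul]
  exact fun hkl => h (congrArg (fun r : BIdx I n d => (⟨r.1, r.2.1⟩ : Σ α, Fin (n α))) hkl)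

lemma singletBlock_kronecker_one_apply_self
    (O : Matrix (BIdx I n d) (BIdx I n d) ℂ) (κ : BIdx I n nbar) :
    singletBlock (O ⊗ₖ (1 : Matrix (BIdx I nbar d) (BIdx I nbar d) ℂ)) κ κ
      = ∑ k, O ⟨κ.1, (κ.2.1, k)⟩ ⟨κ.1, (κ.2.1, k)⟩ := by
  rw [singletBlock_apply]
  refine Finset.sum_congr rfl fun k _ => ?_
  simp [singletIdx, one_apply]

lemma singletBlock_one_kronecker_apply_self
    (O : Matrix (BIdx I nbar d) (BIdx I nbar d) ℂ) (κ : BIdx I n nbar) :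
    singletBlock ((1 : Matrix (BIdx I n d) (BIdx I n d) ℂ) ⊗ₖ O) κ κ
      = ∑ k, O ⟨κ.1, (κ.2.2, k)⟩ ⟨κ.1, (κ.2.2, k)⟩ := by
  rw [singletBlock_apply]
  refine Finset.sum_congr rfl fun k _ => ?_
  simp [singletIdx, one_apply]

lemma exists_singletBlock_kronecker_one_eq_diagonal
    (O : Matrix (BIdx I n d) (BIdx I n d) ℂ) (O' : Matrix (BIdx I nbar d) (BIdx I nbar d) ℂ)
    (h : singletBlock (O ⊗ₖ (1 : Matrix (BIdx I nbar d) (BIdx I nbar d) ℂ))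
      = singletBlock ((1 : Matrix (BIdx I n d) (BIdx I n d) ℂ) ⊗ₖ O')) :
    ∃ c : I → ℂ, singletBlock (O ⊗ₖ (1 : Matrix (BIdx I nbar d) (BIdx I nbar d) ℂ))
      = diagonal fun κ : BIdx I n nbar => c κ.1 := by
  refine Matrix.exists_eq_diagonal_comp_fst _ (fun κ κ' hne => ?_) ?_
  · obtain ⟨α, i, j⟩ := κ
    obtain ⟨α', i', j'⟩ := κ'
    by_cases hj : (⟨α, j⟩ : Σ α, Fin (nbar α)) = ⟨α', j'⟩
    · rw [h]
      refine singletBlock_one_kronecker_apply_of_ne O' fun hi => hne ?_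
      simp only [Sigma.mk.inj_iff] at hi hj
      obtain ⟨rfl, hi⟩ := hi
      simp_all
    · exact singletBlock_kronecker_one_apply_of_ne O hj
  · rintro ⟨α, i, j⟩ ⟨_, i', j'⟩ rfl
    have hr := fun i j => singletBlock_kronecker_one_apply_self
      (nbar := nbar) O ⟨α, (i, j)⟩
    have hrbar := fun i j => h ▸ singletBlock_one_kronecker_apply_self
      (n := n) O' ⟨α, (i, j)⟩
    rw [hr i j, ← hr i j', hrbar i j', ← hrbar i' j']

lemma singletProj_mul_diagonal_mul_singletProj (hd : ∀ α, 1 ≤ d α)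
    (h : BIdx I n d × BIdx I nbar d → ℂ) (c : I → ℂ)
    (hh : ∀ κ k, h (singletIdx d κ k) = d κ.1 * c κ.1) :
    singletProj n nbar d * diagonal h * singletProj n nbar d
      = singlets n nbar d * diagonal (fun κ : BIdx I n nbar => c κ.1) * (singlets n nbar d)ᴴ := by
  rw [singletProj_mul_mul_singletProj, singletBlock_diagonal,
    diagonal_mul_diagonal, diagonal_mul_diagonal]
  congr
  ext κ
  have hdκ : (d κ.1 : ℂ) ≠ 0 := Nat.cast_ne_zero.mpr (Nat.pos_iff_ne_zero.mp (hd κ.1))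
  simp only [hh, Finset.sum_const, Finset.card_univ, Fintype.card_fin, nsmul_eq_mul]
  field_simp

lemma sandwich_mem_inter_iff (hd : ∀ α, 1 ≤ d α)
    (T : Matrix (BIdx I n d × BIdx I nbar d) (BIdx I n d × BIdx I nbar d) ℂ) :
    ((∃ O : Matrix (BIdx I n d) (BIdx I n d) ℂ, T = singletProj n nbar d
        * (O ⊗ₖ (1 : Matrix (BIdx I nbar d) (BIdx I nbar d) ℂ)) * singletProj n nbar d) ∧
      ∃ O' : Matrix (BIdx I nbar d) (BIdx I nbar d) ℂ, T = singletProj n nbar d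
        * ((1 : Matrix (BIdx I n d) (BIdx I n d) ℂ) ⊗ₖ O') * singletProj n nbar d)
      ↔ ∃ c : I → ℂ,
        T = singlets n nbar d * diagonal (fun κ : BIdx I n nbar => c κ.1)
          * (singlets n nbar d)ᴴ := by
  constructor
  · rintro ⟨⟨O, rfl⟩, O', h⟩
    simp only [singletProj_mul_mul_singletProj] at h ⊢
    have hAB := Matrix.eq_of_diagonal_mul_mul_diagonal_eq
      (fun κ => inv_ne_zero (Nat.cast_ne_zero.mpr (Nat.pos_iff_ne_zero.mp (hd κ.1))))
      (singlets_conj_injective hd h)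
    obtain ⟨c, hc⟩ := exists_singletBlock_kronecker_one_eq_diagonal O O' hAB
    exact ⟨fun α => (d α : ℂ)⁻¹ * c α * (d α : ℂ)⁻¹,
      by rw [hc, diagonal_mul_diagonal, diagonal_mul_diagonal]⟩
  · rintro ⟨c, rfl⟩
    refine ⟨⟨diagonal fun r => d r.1 * c r.1, ?_⟩, ⟨diagonal fun r => d r.1 * c r.1, ?_⟩⟩
    all_goals
      rw [← diagonal_one, diagonal_kronecker_diagonal,
        singletProj_mul_diagonal_mul_singletProj hd _ c fun κ k => by simp [singletIdx]]

lemma sum_smul_Ptilde (c : I → ℂ) :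
    ∑ α, c α • Ptilde n nbar d α
      = singlets n nbar d * diagonal (fun κ : BIdx I n nbar => c κ.1 / d κ.1)
          * (singlets n nbar d)ᴴ := by
  rw [singlets_mul_diagonal_mul_conjTranspose, Fintype.sum_sigma]
  refine Finset.sum_congr rfl fun α _ => ?_
  simp only [Ptilde, smul_smul, Fintype.sum_prod_type, Finset.smul_sum, div_eq_mul_inv]
  rfl

lemma mem_span_range_Ptilde_iff (hd : ∀ α, 1 ≤ d α)
    (T : Matrix (BIdx I n d × BIdx I nbar d) (BIdx I n d × BIdx I nbar d) ℂ) :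
    T ∈ Submodule.span ℂ (Set.range (Ptilde n nbar d)) ↔ ∃ c : I → ℂ,
      T = singlets n nbar d * diagonal (fun κ : BIdx I n nbar => c κ.1) * (singlets n nbar d)ᴴ := by
  simp only [Submodule.mem_span_range_iff_exists_fun, sum_smul_Ptilde]
  constructor
  · rintro ⟨c, rfl⟩
    exact ⟨fun α => c α / d α, rfl⟩
  · rintro ⟨c, rfl⟩
    have hd' : ∀ α, (d α : ℂ) ≠ 0 := fun α => Nat.cast_ne_zero.mpr (Nat.pos_iff_ne_zero.mp (hd α))
    exact ⟨fun α => c α * d α, by simp only [mul_div_assoc, div_self (hd' _), mul_one]⟩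

end Center

/-- the center of the gauge-invariant subregion algebra:
`Ã_r ∩ Ã_r̄ = span_ℂ {P̃^α : α ∈ I}`, where
`P̃^α = d_α⁻¹ Σ_{ijkℓ} |αik⟩⟨αiℓ| ⊗ |ᾱjk⟩⟨ᾱjℓ|` are the superselection-sector
projections. -/
theorem stmt7 (G I : Type) [Group G] [Fintype G] [Fintype I] [DecidableEq I]
    (d : I → ℕ) (hd : ∀ α, 1 ≤ d α)
    (D : ∀ α : I, G →* Matrix.unitaryGroup (Fin (d α)) ℂ)
    (hirr : ∀ α (W : Submodule ℂ (Fin (d α) → ℂ)),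
      (∀ g : G, ∀ x ∈ W, (D α g : Matrix (Fin (d α)) (Fin (d α)) ℂ) *ᵥ x ∈ W) →
      W = ⊥ ∨ W = ⊤)
    (hnoniso : ∀ α β, α ≠ β → ∀ F : Matrix (Fin (d α)) (Fin (d β)) ℂ,
      (∀ g : G, (D α g : Matrix (Fin (d α)) (Fin (d α)) ℂ) * F
          = F * (D β g : Matrix (Fin (d β)) (Fin (d β)) ℂ)) → F = 0)
    (n nbar : I → ℕ) :
    AtildeR n nbar D ∩ AtildeRbar n nbar D
      = (Submodule.span ℂ (Set.range (fun α : I => Ptilde n nbar d α)) :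
          Submodule ℂ (Matrix (BIdx I n d × BIdx I nbar d) (BIdx I n d × BIdx I nbar d) ℂ)) := by
  ext T
  rw [SetLike.mem_coe, mem_span_range_Ptilde_iff hd, ← sandwich_mem_inter_iff hd,
    ← gaugeProj_eq_singletProj hirr hnoniso]
  rfl
end

section
/- With the setup below, define the rescaled trace τ on operators T of H by τ(T) := Σ_{α ∈ I, n̄_α ≥ 1} (1/n̄_α) Tr_H(P̃^α T), where P̃^α := (1/d_α) Σ_{i,j,k,ℓ} |α i k⟩_r⟨α i ℓ| ⊗ |ᾱ j k⟩_r̄⟨ᾱ j ℓ|. Then: (i) for every α ∈ I with n_α ≥ 1 and n̄_α ≥ 1 and every 1 ≤ i ≤ n_α, τ(P̃^{αi}_r) = 1, where P̃^{αi}_r := ((Σ_k |α i k⟩_r⟨α i k|) ⊗ 1) Π; and (ii) for every α ∈ I with n̄_α ≥ 1 and every O ∈ End(H_r) supported on the α-block (i.e., O = P̂^α_r O P̂^α_r with P̂^α_r := Σ_{i,k} |α i k⟩_r⟨α i k|), one has τ((O ⊗ 1) Π) = (1/d_α) Tr_{H_r}(O). (This is the relation between the rescaled trace on the gauge-invariant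 algebra, normalized so minimal projections have trace one, and the ordinary trace on the pre-gauged algebra.) -/
open Matrix
open scoped Kronecker ComplexOrder

/-!
By Schur orthogonality, `∑_g D^β(g)_{k'k} conj (D^β(g)_{lk}) = |G| / d_β · δ_{k'l}`, so averaging
`A_r(g) ⊗ A_r̄(g)` over `G` turns the entries of `(O ⊗ 1) Π` seen by `P̃^β` into `d_β⁻¹` times the
diagonal of the `β`-block of `O`. Hence `τ((O ⊗ 1) Π) = ∑_{β, n̄_β ≥ 1} d_β⁻¹ Tr(O_ββ)`, and both
claims are read off from the block traces: in (i) the only nonzero one is `Tr(O_αα) = d_α`, and in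
(ii) `O` lives in the `α`-block, so `Tr(O_αα) = Tr(O)`.
-/

namespace Matrix

def IsIrreducibleFamily {ι K G : Type*} [Fintype ι] [Field K] (ρ : G → Matrix ι ι K) : Prop :=
  ∀ W : Submodule K (ι → K), (∀ g, ∀ x ∈ W, ρ g *ᵥ x ∈ W) → W = ⊥ ∨ W = ⊤

variable {ι : Type*} [Fintype ι] [DecidableEq ι]

/-- Schur's lemma: the eigenspace of `M` for any eigenvalue is invariant, hence everything. -/
lemma IsIrreducibleFamily.exists_eq_smul_one_of_commute {K G : Type*} [Field K] [IsAlgClosed K]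
    [Nonempty ι] {ρ : G → Matrix ι ι K} (hirr : IsIrreducibleFamily ρ)
    {M : Matrix ι ι K} (hM : ∀ g, ρ g * M = M * ρ g) :
    ∃ c : K, M = c • 1 := by
  obtain ⟨c, hc⟩ := Module.End.exists_eigenvalue (toLin' M)
  obtain ⟨x, hx⟩ := hc.exists_hasEigenvector
  refine ⟨c, sub_eq_zero.mp (toLin'.map_eq_zero_iff.mp (LinearMap.ker_eq_top.mp ?_))⟩
  set W := LinearMap.ker (toLin' (M - c • 1))
  have hinv : ∀ g, ∀ y ∈ W, ρ g *ᵥ y ∈ W := by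
    intro g y hy
    have hcomm : (M - c • 1) * ρ g = ρ g * (M - c • 1) := by simp [sub_mul, mul_sub, hM]
    simp only [W, LinearMap.mem_ker, toLin'_apply] at hy ⊢
    rw [mulVec_mulVec, hcomm, ← mulVec_mulVec, hy, mulVec_zero]
  have hxW : x ∈ W := by
    simpa [W, sub_mulVec, smul_mulVec, sub_eq_zero] using hx.apply_eq_smul
  exact (hirr W hinv).resolve_left fun hbot => hx.2 (by simpa [hbot] using hxW)

variable {G : Type*} [Group G] [Fintype G]

lemma commute_sum_mul_mul_star {α : Type*} [CommRing α] [StarRing α]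
    (D : G →* unitaryGroup ι α) (E : Matrix ι ι α) (h : G) :
    (D h : Matrix ι ι α) * ∑ g, D g * E * star (D g : Matrix ι ι α)
      = (∑ g, D g * E * star (D g : Matrix ι ι α)) * D h := by
  rw [Finset.mul_sum, Finset.sum_mul]
  refine Fintype.sum_equiv (Equiv.mulLeft h) _ _ fun g => ?_
  simp only [Equiv.coe_mulLeft, map_mul, Submonoid.coe_mul, StarMul.star_mul, Matrix.mul_assoc,
    UnitaryGroup.star_mul_self, Matrix.mul_one]

/-- Schur orthogonality, from Schur's lemma applied to the average of `D g * single k k 1 * (D g)⋆`,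
whose trace is `|G|`. -/
lemma sum_apply_mul_conj_apply {D : G →* unitaryGroup ι ℂ}
    (hirr : IsIrreducibleFamily fun g => (D g : Matrix ι ι ℂ)) (a b k : ι) :
    ∑ g, (D g : Matrix ι ι ℂ) a k * starRingEnd ℂ ((D g : Matrix ι ι ℂ) b k)
      = Fintype.card G / Fintype.card ι * (1 : Matrix ι ι ℂ) a b := by
  have : Nonempty ι := ⟨k⟩
  set F := ∑ g, (D g : Matrix ι ι ℂ) * single k k 1 * star (D g : Matrix ι ι ℂ)
  obtain ⟨c, hc⟩ : ∃ c : ℂ, F = c • 1 :=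
    hirr.exists_eq_smul_one_of_commute (commute_sum_mul_mul_star D _)
  have htrace : F.trace = Fintype.card G := by
    simp [F, trace_sum, trace_mul_cycle _ (single k k (1 : ℂ))]
  have hcard : (Fintype.card ι : ℂ) ≠ 0 := Nat.cast_ne_zero.mpr Fintype.card_ne_zero
  have hc' : c = Fintype.card G / Fintype.card ι := by
    rw [← htrace, hc, trace_smul, trace_one, smul_eq_mul, mul_div_cancel_right₀ _ hcard]
  calc ∑ g, (D g : Matrix ι ι ℂ) a k * starRingEnd ℂ ((D g : Matrix ι ι ℂ) b k) = F a b := by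
        simp [F, sum_apply, mul_apply, single_apply, star_apply, ite_and]
    _ = _ := by rw [hc, hc', smul_apply, smul_eq_mul]

end Matrix

section BlockTrace

variable {I R : Type*} {ι : I → Type*} [∀ β, Fintype (ι β)]

def blockTrace [AddCommMonoid R] (O : Matrix (Σ β, ι β) (Σ β, ι β) R) (β : I) : R :=
  (O.submatrix (Sigma.mk β) (Sigma.mk β)).trace

lemma trace_eq_sum_blockTrace [AddCommMonoid R] [Fintype I]
    (O : Matrix (Σ β, ι β) (Σ β, ι β) R) : O.trace = ∑ β, blockTrace O β :=
  Fintype.sum_sigma _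

lemma trace_eq_blockTrace_of_forall_ne [AddCommMonoid R] [Fintype I]
    {O : Matrix (Σ β, ι β) (Σ β, ι β) R} {α : I} (hO : ∀ β ≠ α, blockTrace O β = 0) :
    O.trace = blockTrace O α := by
  rw [trace_eq_sum_blockTrace, Finset.sum_eq_single α (fun β _ hβ => hO β hβ) (by simp)]

lemma blockTrace_sum [AddCommMonoid R] {κ : Type*} (s : Finset κ)
    (M : κ → Matrix (Σ β, ι β) (Σ β, ι β) R) (β : I) :
    blockTrace (∑ k ∈ s, M k) β = ∑ k ∈ s, blockTrace (M k) β := by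
  simp only [blockTrace, trace, diag, submatrix_apply, Matrix.sum_apply]
  exact Finset.sum_comm

lemma blockTrace_single_self [Semiring R] [DecidableEq I] [∀ β, DecidableEq (ι β)]
    (p : Σ β, ι β) (β : I) :
    blockTrace (single p p (1 : R)) β = if p.1 = β then 1 else 0 := by
  obtain ⟨γ, y⟩ := p
  by_cases h : γ = β
  · subst h
    simp [blockTrace, trace, single_apply]
  · simp [blockTrace, trace, h]

lemma blockTrace_eq_zero_of_eq_mul_mul [NonUnitalNonAssocSemiring R] [Fintype I]
    {O P : Matrix (Σ β, ι β) (Σ β, ι β) R} {β : I} (hO : O = P * O * P)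
    (hP : ∀ x c, P ⟨β, x⟩ c = 0) : blockTrace O β = 0 := by
  rw [hO]
  simp [blockTrace, trace, mul_apply, hP]

end BlockTrace

section GaugeProjection

variable {G I : Type} [Group G] [Fintype I] [DecidableEq I] {d : I → ℕ}
  {n nbar : I → ℕ} {D : ∀ α : I, G →* Matrix.unitaryGroup (Fin (d α)) ℂ}

lemma mul_Arep_apply (O : Matrix (BIdx I n d) (BIdx I n d) ℂ) (g : G) (x : BIdx I n d) (β : I)
    (i : Fin (n β)) (k : Fin (d β)) :
    (O * Arep n D g) x ⟨β, (i, k)⟩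
      = ∑ k', O x ⟨β, (i, k')⟩ * (D β g : Matrix (Fin (d β)) (Fin (d β)) ℂ) k' k := by
  rw [mul_apply, Fintype.sum_sigma, Finset.sum_eq_single β, Fintype.sum_prod_type,
    Finset.sum_eq_single i]
  · simp [Arep, blockDiagonal'_apply_eq]
  · intro i' _ hi'
    simp [Arep, blockDiagonal'_apply_eq, one_apply_ne hi']
  · simp
  · intro β' _ hβ'
    simp [Arep, blockDiagonal'_apply_ne _ _ _ hβ']
  · simp

lemma Abar_apply_same (g : G) (β : I) (j : Fin (nbar β)) (l k : Fin (d β)) :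
    Abar nbar D g ⟨β, (j, l)⟩ ⟨β, (j, k)⟩
      = starRingEnd ℂ ((D β g : Matrix (Fin (d β)) (Fin (d β)) ℂ) l k) := by
  simp [Abar, blockDiagonal'_apply_eq]

variable [Fintype G]

lemma kronecker_one_mul_gaugeProj_apply {β : I}
    (hirr : IsIrreducibleFamily fun g => (D β g : Matrix (Fin (d β)) (Fin (d β)) ℂ))
    (O : Matrix (BIdx I n d) (BIdx I n d) ℂ) (i : Fin (n β)) (j : Fin (nbar β))
    (k l : Fin (d β)) :
    ((O ⊗ₖ (1 : Matrix (BIdx I nbar d) (BIdx I nbar d) ℂ)) * gaugeProj n nbar D)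
        (⟨β, (i, l)⟩, ⟨β, (j, l)⟩) (⟨β, (i, k)⟩, ⟨β, (j, k)⟩)
      = (d β : ℂ)⁻¹ * O ⟨β, (i, l)⟩ ⟨β, (i, l)⟩ := by
  have hG : (Fintype.card G : ℂ) ≠ 0 := Nat.cast_ne_zero.mpr Fintype.card_ne_zero
  simp only [gaugeProj, Matrix.mul_smul, Matrix.mul_sum, Matrix.smul_apply, Matrix.sum_apply,
    ← mul_kronecker_mul, Matrix.one_mul, kroneckerMap_apply, Abar_apply_same, mul_Arep_apply,
    Finset.sum_mul]
  rw [Finset.sum_comm]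
  simp only [mul_assoc, ← Finset.mul_sum, sum_apply_mul_conj_apply hirr, Fintype.card_fin,
    one_apply, mul_ite, mul_one, mul_zero, Finset.sum_ite_eq', Finset.mem_univ, if_true,
    smul_eq_mul]
  field_simp

lemma trace_Ptilde_mul_kronecker_one_mul_gaugeProj {β : I}
    (hirr : IsIrreducibleFamily fun g => (D β g : Matrix (Fin (d β)) (Fin (d β)) ℂ))
    (O : Matrix (BIdx I n d) (BIdx I n d) ℂ) :
    (Ptilde n nbar d β
        * ((O ⊗ₖ (1 : Matrix (BIdx I nbar d) (BIdx I nbar d) ℂ)) * gaugeProj n nbar D)).trace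
      = nbar β * (d β : ℂ)⁻¹ * blockTrace O β := by
  rw [Ptilde, Matrix.smul_mul, trace_smul]
  simp only [Matrix.sum_mul, trace_sum, trace_single_mul, kronecker_one_mul_gaugeProj_apply hirr,
    smul_eq_mul, one_mul]
  simp only [blockTrace, trace, diag, submatrix_apply, Fintype.sum_prod_type, Finset.sum_const,
    Finset.card_univ, Fintype.card_fin, nsmul_eq_mul]
  obtain hd | hd := eq_or_ne (d β : ℂ) 0
  · simp [hd]
  · simp only [← Finset.mul_sum, mul_inv_cancel_left₀ hd]
    ring

lemma tauTr_kronecker_one_mul_gaugeProj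
    (hirr : ∀ α, IsIrreducibleFamily fun g => (D α g : Matrix (Fin (d α)) (Fin (d α)) ℂ))
    (O : Matrix (BIdx I n d) (BIdx I n d) ℂ) :
    tauTr n nbar d ((O ⊗ₖ (1 : Matrix (BIdx I nbar d) (BIdx I nbar d) ℂ)) * gaugeProj n nbar D)
      = ∑ β ∈ Finset.univ.filter (fun β => 1 ≤ nbar β), (d β : ℂ)⁻¹ * blockTrace O β := by
  refine Finset.sum_congr rfl fun β hβ => ?_
  have hnbar : (nbar β : ℂ) ≠ 0 :=
    Nat.cast_ne_zero.mpr (Nat.one_le_iff_ne_zero.mp (Finset.mem_filter.mp hβ).2)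
  rw [trace_Ptilde_mul_kronecker_one_mul_gaugeProj (hirr β), ← mul_assoc, ← mul_assoc,
    inv_mul_cancel₀ hnbar, one_mul]

lemma tauTr_kronecker_one_mul_gaugeProj_of_forall_ne
    (hirr : ∀ α, IsIrreducibleFamily fun g => (D α g : Matrix (Fin (d α)) (Fin (d α)) ℂ))
    {α : I} (hα : 1 ≤ nbar α) {O : Matrix (BIdx I n d) (BIdx I n d) ℂ}
    (hO : ∀ β ≠ α, blockTrace O β = 0) :
    tauTr n nbar d ((O ⊗ₖ (1 : Matrix (BIdx I nbar d) (BIdx I nbar d) ℂ)) * gaugeProj n nbar D)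
      = (d α : ℂ)⁻¹ * blockTrace O α := by
  rw [tauTr_kronecker_one_mul_gaugeProj hirr, Finset.sum_eq_single_of_mem α (by simp [hα])]
  intro β _ hβ
  rw [hO β hβ, mul_zero]

end GaugeProjection

theorem stmt10_general (G I : Type) [Group G] [Fintype G] [Fintype I] [DecidableEq I]
    (d : I → ℕ) (hd : ∀ α, 1 ≤ d α)
    (D : ∀ α : I, G →* Matrix.unitaryGroup (Fin (d α)) ℂ)
    (hirr : ∀ α (W : Submodule ℂ (Fin (d α) → ℂ)),
      (∀ g : G, ∀ x ∈ W, (D α g : Matrix (Fin (d α)) (Fin (d α)) ℂ) *ᵥ x ∈ W) →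
      W = ⊥ ∨ W = ⊤)
    (n nbar : I → ℕ) :
    -- (i) the rescaled trace of each minimal projection is one
    (∀ α : I, 1 ≤ n α → 1 ≤ nbar α → ∀ i : Fin (n α),
      tauTr n nbar d
        (((∑ k : Fin (d α),
            Matrix.single (⟨α, (i, k)⟩ : BIdx I n d) (⟨α, (i, k)⟩ : BIdx I n d) 1)
          ⊗ₖ (1 : Matrix (BIdx I nbar d) (BIdx I nbar d) ℂ)) * gaugeProj n nbar D) = 1) ∧
    -- (ii) relation between the rescaled and the ordinary trace on the α-block
    (∀ α : I, 1 ≤ nbar α → ∀ O : Matrix (BIdx I n d) (BIdx I n d) ℂ,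
      O = (∑ i : Fin (n α), ∑ k : Fin (d α),
            Matrix.single (⟨α, (i, k)⟩ : BIdx I n d) (⟨α, (i, k)⟩ : BIdx I n d) 1)
          * O *
          (∑ i : Fin (n α), ∑ k : Fin (d α),
            Matrix.single (⟨α, (i, k)⟩ : BIdx I n d) (⟨α, (i, k)⟩ : BIdx I n d) 1) →
      tauTr n nbar d
          ((O ⊗ₖ (1 : Matrix (BIdx I nbar d) (BIdx I nbar d) ℂ)) * gaugeProj n nbar D)
        = (d α : ℂ)⁻¹ * O.trace) := by
  refine ⟨fun α _ hα i => ?_, fun α hα O hO => ?_⟩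
  · have hblock : ∀ β, blockTrace (∑ k : Fin (d α),
        single (⟨α, (i, k)⟩ : BIdx I n d) ⟨α, (i, k)⟩ (1 : ℂ)) β
          = if α = β then (d α : ℂ) else 0 := by
      intro β
      simp only [blockTrace_sum, blockTrace_single_self]
      split_ifs <;> simp
    have hdα : (d α : ℂ) ≠ 0 := Nat.cast_ne_zero.mpr (Nat.one_le_iff_ne_zero.mp (hd α))
    rw [tauTr_kronecker_one_mul_gaugeProj_of_forall_ne hirr hα
        fun β hβ => by simp [hblock, Ne.symm hβ], hblock, if_pos rfl, inv_mul_cancel₀ hdα]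
  · have hO' : ∀ β ≠ α, blockTrace O β = 0 := fun β hβ =>
      blockTrace_eq_zero_of_eq_mul_mul hO fun x c => by simp [Matrix.sum_apply, Ne.symm hβ]
    rw [tauTr_kronecker_one_mul_gaugeProj_of_forall_ne hirr hα hO',
      trace_eq_blockTrace_of_forall_ne hO']

/-- properties of the rescaled trace
`τ(T) = Σ_{α : n̄_α ≥ 1} (1/n̄_α) Tr(P̃^α T)`:
(i) minimal projections `P̃^{αi}_r = ((Σ_k|αik⟩⟨αik|) ⊗ 1) Π` have `τ = 1`;
(ii) for `O` supported on the α-block, `τ((O ⊗ 1)Π) = d_α⁻¹ Tr(O)`. -/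
theorem stmt10 (G I : Type) [Group G] [Fintype G] [Fintype I] [DecidableEq I]
    (d : I → ℕ) (hd : ∀ α, 1 ≤ d α)
    (D : ∀ α : I, G →* Matrix.unitaryGroup (Fin (d α)) ℂ)
    (hirr : ∀ α (W : Submodule ℂ (Fin (d α) → ℂ)),
      (∀ g : G, ∀ x ∈ W, (D α g : Matrix (Fin (d α)) (Fin (d α)) ℂ) *ᵥ x ∈ W) →
      W = ⊥ ∨ W = ⊤)
    (hnoniso : ∀ α β, α ≠ β → ∀ F : Matrix (Fin (d α)) (Fin (d β)) ℂ,
      (∀ g : G, (D α g : Matrix (Fin (d α)) (Fin (d α)) ℂ) * F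
          = F * (D β g : Matrix (Fin (d β)) (Fin (d β)) ℂ)) → F = 0)
    (n nbar : I → ℕ) :
    -- (i) the rescaled trace of each minimal projection is one
    (∀ α : I, 1 ≤ n α → 1 ≤ nbar α → ∀ i : Fin (n α),
      tauTr n nbar d
        (((∑ k : Fin (d α),
            Matrix.single (⟨α, (i, k)⟩ : BIdx I n d) (⟨α, (i, k)⟩ : BIdx I n d) 1)
          ⊗ₖ (1 : Matrix (BIdx I nbar d) (BIdx I nbar d) ℂ)) * gaugeProj n nbar D) = 1) ∧
    -- (ii) relation between the rescaled and the ordinary trace on the α-block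
    (∀ α : I, 1 ≤ nbar α → ∀ O : Matrix (BIdx I n d) (BIdx I n d) ℂ,
      O = (∑ i : Fin (n α), ∑ k : Fin (d α),
            Matrix.single (⟨α, (i, k)⟩ : BIdx I n d) (⟨α, (i, k)⟩ : BIdx I n d) 1)
          * O *
          (∑ i : Fin (n α), ∑ k : Fin (d α),
            Matrix.single (⟨α, (i, k)⟩ : BIdx I n d) (⟨α, (i, k)⟩ : BIdx I n d) 1) →
      tauTr n nbar d
          ((O ⊗ₖ (1 : Matrix (BIdx I nbar d) (BIdx I nbar d) ℂ)) * gaugeProj n nbar D)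
        = (d α : ℂ)⁻¹ * O.trace) :=
  stmt10_general G I d hd D hirr n nbar
end

section
/- Block structure of the reduced state of a gauge-invariant state: with the setup below, let ρ be a positive semidefinite operator on H with Π ρ Π = ρ. Define the matrix of the reduced state on H_r by R_{(α i k),(β j ℓ)} := Σ_{γ ∈ I} Σ_{1≤j'≤n̄_γ} Σ_{1≤m≤d_γ} ⟨(α i k) ⊗ (γ̄ j' m)| ρ |(β j ℓ) ⊗ (γ̄ j' m)⟩. Then R_{(α i k),(β j ℓ)} = 0 unless α = β and k = ℓ, and the diagonal-in-k entries R_{(α i k),(α j k)} are independent of k: R_{(α i k),(α j k)} = ρ_{αij} for every 1 ≤ k ≤ d_α, where ρ_{αij} := (1/d_α) Σ_{k=1}^{d_α} R_{(α i k),(α j k)}. -/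
open Matrix
open scoped Kronecker ComplexOrder

/-!
Averaging over `G` makes `Π` absorb every `U g = A_r(g) ⊗ A_r̄(g)`, so `Π ρ Π = ρ` forces
`U g * ρ * U g⁻¹ = ρ`. The partial trace over `H_r̄` cancels the `A_r̄` factors, so the reduced
matrix `R` commutes with every `A_r(g)`. Its `(α i, β j)` blocks are then intertwiners from `D^β`
to `D^α`: they vanish for `α ≠ β`, and for `α = β` they are scalars by Schur's lemma.
-/

namespace Matrix

variable {R P W : Type*} [CommSemiring R] [Fintype P] [Fintype W]

def partialTrace (M : Matrix (P × W) (P × W) R) : Matrix P P R :=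
  of fun p q => ∑ w, M (p, w) (q, w)

theorem partialTrace_kronecker_one_mul [DecidableEq W] (A : Matrix P P R)
    (M : Matrix (P × W) (P × W) R) :
    partialTrace ((A ⊗ₖ (1 : Matrix W W R)) * M) = A * partialTrace M := by
  ext p q
  simp only [partialTrace, of_apply, mul_apply, Fintype.sum_prod_type, kroneckerMap_apply,
    one_apply, mul_ite, mul_one, mul_zero, ite_mul, zero_mul, Finset.sum_ite_eq,
    Finset.mem_univ, if_true, Finset.mul_sum]
  exact Finset.sum_comm

theorem partialTrace_mul_kronecker_one [DecidableEq W] (A : Matrix P P R)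
    (M : Matrix (P × W) (P × W) R) :
    partialTrace (M * (A ⊗ₖ (1 : Matrix W W R))) = partialTrace M * A := by
  ext p q
  simp only [partialTrace, of_apply, mul_apply, Fintype.sum_prod_type, kroneckerMap_apply,
    one_apply, mul_ite, mul_one, mul_zero, Finset.sum_ite_eq', Finset.mem_univ, if_true,
    Finset.sum_mul]
  exact Finset.sum_comm

theorem partialTrace_one_kronecker_mul_comm [DecidableEq P] (B : Matrix W W R)
    (M : Matrix (P × W) (P × W) R) :
    partialTrace (((1 : Matrix P P R) ⊗ₖ B) * M)
      = partialTrace (M * ((1 : Matrix P P R) ⊗ₖ B)) := by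
  ext p q
  simp only [partialTrace, of_apply, mul_apply, Fintype.sum_prod_type, kroneckerMap_apply,
    one_apply, ite_mul, one_mul, zero_mul, mul_ite, mul_zero, Finset.sum_ite_irrel,
    Finset.sum_const_zero, Finset.sum_ite_eq, Finset.sum_ite_eq', Finset.mem_univ, if_true]
  rw [Finset.sum_comm]
  exact Finset.sum_congr rfl fun _ _ => Finset.sum_congr rfl fun _ _ => mul_comm (B _ _) _

theorem partialTrace_kronecker_mul_mul_kronecker [DecidableEq P] [DecidableEq W]
    (A A' : Matrix P P R) {B B' : Matrix W W R} (hB : B' * B = 1)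
    (M : Matrix (P × W) (P × W) R) :
    partialTrace ((A ⊗ₖ B) * M * (A' ⊗ₖ B')) = A * partialTrace M * A' := by
  have hsplit : (A ⊗ₖ B) * M * (A' ⊗ₖ B') =
      (A ⊗ₖ 1) * (((1 : Matrix P P R) ⊗ₖ B) * (M * (1 ⊗ₖ B'))) * (A' ⊗ₖ 1) := by
    rw [← Matrix.mul_assoc, ← Matrix.mul_assoc, ← mul_kronecker_mul, Matrix.mul_assoc,
      Matrix.mul_assoc, ← mul_kronecker_mul, Matrix.mul_one, Matrix.one_mul, Matrix.mul_one,
      Matrix.one_mul, Matrix.mul_assoc]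
  rw [hsplit, partialTrace_mul_kronecker_one, partialTrace_kronecker_one_mul,
    partialTrace_one_kronecker_mul_comm, Matrix.mul_assoc M, ← mul_kronecker_mul, Matrix.one_mul,
    hB, one_kronecker_one, Matrix.mul_one]

section Monoid

variable {G : Type*} [Monoid G]

def kroneckerHom {R P W : Type*} [CommSemiring R] [Fintype P] [Fintype W] [DecidableEq P]
    [DecidableEq W] (φ : G →* Matrix P P R) (ψ : G →* Matrix W W R) :
    G →* Matrix (P × W) (P × W) R where
  toFun g := φ g ⊗ₖ ψ g
  map_one' := by rw [map_one, map_one, one_kronecker_one]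
  map_mul' g h := by rw [map_mul, map_mul, mul_kronecker_mul]

theorem kroneckerHom_apply {R P W : Type*} [CommSemiring R] [Fintype P] [Fintype W]
    [DecidableEq P] [DecidableEq W] (φ : G →* Matrix P P R) (ψ : G →* Matrix W W R) (g : G) :
    kroneckerHom φ ψ g = φ g ⊗ₖ ψ g := rfl

section BlockRep

variable {R I : Type*} [CommSemiring R] [Fintype I] [DecidableEq I] (ι : I → Type*)
  {m : I → Type*} [∀ α, Fintype (ι α)] [∀ α, DecidableEq (ι α)] [∀ α, Fintype (m α)]
  [∀ α, DecidableEq (m α)]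

def blockRep (φ : ∀ α, G →* Matrix (m α) (m α) R) :
    G →* Matrix (Σ α, ι α × m α) (Σ α, ι α × m α) R where
  toFun g := blockDiagonal' fun α => (1 : Matrix (ι α) (ι α) R) ⊗ₖ φ α g
  map_one' := by simp only [map_one, one_kronecker_one]; exact blockDiagonal'_one
  map_mul' g h := by
    rw [← blockDiagonal'_mul]
    simp only [map_mul, ← mul_kronecker_mul, Matrix.one_mul]

variable {ι} {o : Type*}

theorem blockRep_mul_submatrix (φ : ∀ α, G →* Matrix (m α) (m α) R) (g : G)
    (M : Matrix (Σ α, ι α × m α) o R) (α : I) (i : ι α) {κ : Type*} (f : κ → o) :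
    (blockRep ι φ g * M).submatrix (fun k => ⟨α, (i, k)⟩) f
      = φ α g * M.submatrix (fun k => ⟨α, (i, k)⟩) f := by
  ext k x
  simp [blockRep, mul_apply, blockDiagonal'_apply, Fintype.sum_sigma, Fintype.sum_prod_type,
    one_apply]

theorem submatrix_mul_blockRep [Fintype o] (φ : ∀ α, G →* Matrix (m α) (m α) R) (g : G)
    (M : Matrix o (Σ α, ι α × m α) R) (β : I) (j : ι β) {κ : Type*} (e : κ → o) :
    (M * blockRep ι φ g).submatrix e (fun l => ⟨β, (j, l)⟩)
      = M.submatrix e (fun l => ⟨β, (j, l)⟩) * φ β g := by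
  ext x l
  simp [blockRep, mul_apply, blockDiagonal'_apply, Fintype.sum_sigma, Fintype.sum_prod_type,
    one_apply]

end BlockRep

theorem submatrix_mul_eq_mul_submatrix_of_commute_blockRep
    {R I : Type*} [CommSemiring R] [Fintype I] [DecidableEq I] {ι m : I → Type*}
    [∀ α, Fintype (ι α)] [∀ α, DecidableEq (ι α)] [∀ α, Fintype (m α)] [∀ α, DecidableEq (m α)]
    (φ : ∀ α, G →* Matrix (m α) (m α) R) {M : Matrix (Σ α, ι α × m α) (Σ α, ι α × m α) R}
    (hM : ∀ g, Commute (blockRep ι φ g) M) (α β : I) (i : ι α) (j : ι β) (g : G) :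
    φ α g * M.submatrix (fun k => ⟨α, (i, k)⟩) (fun l => ⟨β, (j, l)⟩)
      = M.submatrix (fun k => ⟨α, (i, k)⟩) (fun l => ⟨β, (j, l)⟩) * φ β g := by
  rw [← blockRep_mul_submatrix, (hM g).eq, submatrix_mul_blockRep]

end Monoid

theorem commute_partialTrace_of_kroneckerHom_conj {G R P W : Type*} [Group G] [CommSemiring R]
    [Fintype P] [Fintype W] [DecidableEq P] [DecidableEq W] (φ : G →* Matrix P P R)
    (ψ : G →* Matrix W W R) {ρ : Matrix (P × W) (P × W) R}
    (hρ : ∀ g, kroneckerHom φ ψ g * ρ * kroneckerHom φ ψ g⁻¹ = ρ) (g : G) :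
    Commute (φ g) (partialTrace ρ) := by
  have hψ : ψ g⁻¹ * ψ g = 1 := by rw [← map_mul, inv_mul_cancel, map_one]
  calc φ g * partialTrace ρ = φ g * partialTrace ρ * (φ g⁻¹ * φ g) := by
        rw [← map_mul, inv_mul_cancel, map_one, Matrix.mul_one]
    _ = partialTrace (kroneckerHom φ ψ g * ρ * kroneckerHom φ ψ g⁻¹) * φ g := by
        rw [kroneckerHom_apply, kroneckerHom_apply,
          partialTrace_kronecker_mul_mul_kronecker _ _ hψ, Matrix.mul_assoc _ (φ g⁻¹)]
    _ = partialTrace ρ * φ g := by rw [hρ g]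

end Matrix

namespace MonoidHom

variable {G M : Type*} [Group G] [Fintype G] [Semiring M] (U : G →* M)

theorem mul_sum_apply (g : G) : U g * ∑ h, U h = ∑ h, U h := by
  simp only [Finset.mul_sum, ← map_mul]
  exact Equiv.sum_comp (Equiv.mulLeft g) U

theorem sum_apply_mul (g : G) : (∑ h, U h) * U g = ∑ h, U h := by
  simp only [Finset.sum_mul, ← map_mul]
  exact Equiv.sum_comp (Equiv.mulRight g) U

theorem conj_eq_self_of_average_mul_mul_average {K : Type*} [CommSemiring K] [Algebra K M]
    (c : K) {ρ : M} (hρ : (c • ∑ h, U h) * ρ * (c • ∑ h, U h) = ρ) (g : G) :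
    U g * ρ * U g⁻¹ = ρ := by
  calc U g * ρ * U g⁻¹
      = (U g * (c • ∑ h, U h)) * ρ * ((c • ∑ h, U h) * U g⁻¹) := by
        conv_lhs => rw [← hρ]
        simp only [mul_assoc]
    _ = ρ := by
        rw [mul_smul_comm, mul_sum_apply, smul_mul_assoc (r := c) (x := ∑ h, U h) (U g⁻¹),
          sum_apply_mul, hρ]

end MonoidHom

theorem Matrix.exists_eq_smul_one_of_forall_mul_comm {K ι J : Type*} [Field K] [IsAlgClosed K]
    [Fintype ι] [DecidableEq ι] (S : J → Matrix ι ι K)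
    (hS : ∀ W : Submodule K (ι → K), (∀ j, ∀ x ∈ W, S j *ᵥ x ∈ W) → W = ⊥ ∨ W = ⊤)
    {F : Matrix ι ι K} (hF : ∀ j, S j * F = F * S j) : ∃ c : K, F = c • 1 := by
  rcases isEmpty_or_nonempty ι with hι | hι
  · exact ⟨0, Subsingleton.elim _ _⟩
  obtain ⟨c, hc⟩ := Module.End.exists_eigenvalue (mulVecLin F)
  set E := Module.End.eigenspace (mulVecLin F) c
  have hE : ∀ j, ∀ x ∈ E, S j *ᵥ x ∈ E := by
    intro j x hx
    rw [Module.End.mem_eigenspace_iff, mulVecLin_apply] at hx ⊢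
    rw [mulVec_mulVec, ← hF j, ← mulVec_mulVec, hx, mulVec_smul]
  have htop : E = ⊤ := (hS E hE).resolve_left hc
  refine ⟨c, ext_iff_mulVec.2 fun x => ?_⟩
  have hx : x ∈ E := htop ▸ Submodule.mem_top
  rw [smul_mulVec, one_mulVec]
  exact Module.End.mem_eigenspace_iff.1 hx

section Gauge

variable {G I : Type} [Group G] [Fintype I] [DecidableEq I] {d : I → ℕ}
  (D : ∀ α : I, G →* Matrix.unitaryGroup (Fin (d α)) ℂ)

def repHom (α : I) : G →* Matrix (Fin (d α)) (Fin (d α)) ℂ :=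
  (unitaryGroup (Fin (d α)) ℂ).subtype.comp (D α)

def conjRepHom (α : I) : G →* Matrix (Fin (d α)) (Fin (d α)) ℂ :=
  (starRingEnd ℂ).mapMatrix.toMonoidHom.comp (repHom D α)

theorem gaugeProj_eq_smul_sum [Fintype G] (n nbar : I → ℕ) :
    gaugeProj n nbar D = (Fintype.card G : ℂ)⁻¹ •
      ∑ g, kroneckerHom (blockRep (fun α => Fin (n α)) (repHom D))
        (blockRep (fun α => Fin (nbar α)) (conjRepHom D)) g := rfl

theorem commute_Arep_partialTrace [Fintype G] {n nbar : I → ℕ}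
    {ρ : Matrix (BIdx I n d × BIdx I nbar d) (BIdx I n d × BIdx I nbar d) ℂ}
    (hρ : gaugeProj n nbar D * ρ * gaugeProj n nbar D = ρ) (g : G) :
    Commute (Arep n D g) (partialTrace ρ) := by
  rw [gaugeProj_eq_smul_sum] at hρ
  exact commute_partialTrace_of_kroneckerHom_conj _ _
    (MonoidHom.conj_eq_self_of_average_mul_mul_average _ _ hρ) g

end Gauge

theorem stmt11_general (G I : Type) [Group G] [Fintype G] [Fintype I] [DecidableEq I]
    (d : I → ℕ)
    (D : ∀ α : I, G →* Matrix.unitaryGroup (Fin (d α)) ℂ)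
    (hirr : ∀ α (W : Submodule ℂ (Fin (d α) → ℂ)),
      (∀ g : G, ∀ x ∈ W, (D α g : Matrix (Fin (d α)) (Fin (d α)) ℂ) *ᵥ x ∈ W) →
      W = ⊥ ∨ W = ⊤)
    (hnoniso : ∀ α β, α ≠ β → ∀ F : Matrix (Fin (d α)) (Fin (d β)) ℂ,
      (∀ g : G, (D α g : Matrix (Fin (d α)) (Fin (d α)) ℂ) * F
          = F * (D β g : Matrix (Fin (d β)) (Fin (d β)) ℂ)) → F = 0)
    (n nbar : I → ℕ)
    (ρ : Matrix (BIdx I n d × BIdx I nbar d) (BIdx I n d × BIdx I nbar d) ℂ)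
    (hinv : gaugeProj n nbar D * ρ * gaugeProj n nbar D = ρ) :
    letI R : Matrix (BIdx I n d) (BIdx I n d) ℂ :=
      fun p q => ∑ w : BIdx I nbar d, ρ (p, w) (q, w)
    -- vanishing across distinct sectors
    (∀ α β : I, α ≠ β → ∀ (i : Fin (n α)) (k : Fin (d α)) (j : Fin (n β)) (l : Fin (d β)),
      R ⟨α, (i, k)⟩ ⟨β, (j, l)⟩ = 0) ∧
    -- vanishing off the diagonal in k within a sector
    (∀ (α : I) (i j : Fin (n α)) (k l : Fin (d α)), k ≠ l →
      R ⟨α, (i, k)⟩ ⟨α, (j, l)⟩ = 0) ∧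
    -- the diagonal-in-k entries are independent of k
    (∀ (α : I) (i j : Fin (n α)) (k : Fin (d α)),
      R ⟨α, (i, k)⟩ ⟨α, (j, k)⟩
        = (d α : ℂ)⁻¹ * ∑ k' : Fin (d α), R ⟨α, (i, k')⟩ ⟨α, (j, k')⟩) := by
  beta_reduce
  -- `Arep n D g` unfolds to `blockRep _ (repHom D) g`.
  have hblock := submatrix_mul_eq_mul_submatrix_of_commute_blockRep (repHom D)
    (commute_Arep_partialTrace D hinv) (ι := fun α => Fin (n α))
  have hscalar : ∀ α (i j : Fin (n α)), ∃ c : ℂ,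
      (partialTrace ρ).submatrix (fun k => ⟨α, (i, k)⟩) (fun l => ⟨α, (j, l)⟩) = c • 1 :=
    fun α i j => exists_eq_smul_one_of_forall_mul_comm _ (hirr α) (hblock α α i j)
  refine ⟨fun α β hne i k j l => ?_, fun α i j k l hkl => ?_, fun α i j k => ?_⟩
  · exact congrFun₂ (hnoniso α β hne _ (hblock α β i j)) k l
  · obtain ⟨c, hc⟩ := hscalar α i j
    simpa [partialTrace, hkl] using congrFun₂ hc k l
  · obtain ⟨c, hc⟩ := hscalar α i j
    have hdiag : ∀ k, ∑ w, ρ (⟨α, (i, k)⟩, w) (⟨α, (j, k)⟩, w) = c := fun k => by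
      simpa [partialTrace] using congrFun₂ hc k k
    rw [Finset.sum_congr rfl fun k' _ => hdiag k', hdiag k, Finset.sum_const, Finset.card_univ,
      Fintype.card_fin, nsmul_eq_mul, inv_mul_cancel_left₀ (Nat.cast_ne_zero.2 k.pos.ne')]

/-- block structure of the reduced state of a gauge-invariant state:
the partial trace `R` over `H_r̄` of a positive semidefinite `ρ` with `Π ρ Π = ρ`
vanishes off the diagonal in the sector label and in the irrep index `k`, and its
diagonal-in-`k` entries are independent of `k`. -/
theorem stmt11 (G I : Type) [Group G] [Fintype G] [Fintype I] [DecidableEq I]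
    (d : I → ℕ) (hd : ∀ α, 1 ≤ d α)
    (D : ∀ α : I, G →* Matrix.unitaryGroup (Fin (d α)) ℂ)
    (hirr : ∀ α (W : Submodule ℂ (Fin (d α) → ℂ)),
      (∀ g : G, ∀ x ∈ W, (D α g : Matrix (Fin (d α)) (Fin (d α)) ℂ) *ᵥ x ∈ W) →
      W = ⊥ ∨ W = ⊤)
    (hnoniso : ∀ α β, α ≠ β → ∀ F : Matrix (Fin (d α)) (Fin (d β)) ℂ,
      (∀ g : G, (D α g : Matrix (Fin (d α)) (Fin (d α)) ℂ) * F
          = F * (D β g : Matrix (Fin (d β)) (Fin (d β)) ℂ)) → F = 0)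
    (n nbar : I → ℕ)
    (ρ : Matrix (BIdx I n d × BIdx I nbar d) (BIdx I n d × BIdx I nbar d) ℂ)
    (hpos : ρ.PosSemidef)
    (hinv : gaugeProj n nbar D * ρ * gaugeProj n nbar D = ρ) :
    letI R : Matrix (BIdx I n d) (BIdx I n d) ℂ :=
      fun p q => ∑ w : BIdx I nbar d, ρ (p, w) (q, w)
    -- vanishing across distinct sectors
    (∀ α β : I, α ≠ β → ∀ (i : Fin (n α)) (k : Fin (d α)) (j : Fin (n β)) (l : Fin (d β)),
      R ⟨α, (i, k)⟩ ⟨β, (j, l)⟩ = 0) ∧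
    -- vanishing off the diagonal in k within a sector
    (∀ (α : I) (i j : Fin (n α)) (k l : Fin (d α)), k ≠ l →
      R ⟨α, (i, k)⟩ ⟨α, (j, l)⟩ = 0) ∧
    -- the diagonal-in-k entries are independent of k
    (∀ (α : I) (i j : Fin (n α)) (k : Fin (d α)),
      R ⟨α, (i, k)⟩ ⟨α, (j, k)⟩
        = (d α : ℂ)⁻¹ * ∑ k' : Fin (d α), R ⟨α, (i, k')⟩ ⟨α, (j, k')⟩) :=
  stmt11_general G I d D hirr hnoniso n nbar ρ hinv
end

section
/- Curvature of the Rényi entropy at the phase transition: let d₁, d₂, q₁, q₂ be positive real numbers with q₁/d₁ ≠ q₂/d₂, and define g : ℝ → ℝ by g(n) := log( d₁ (q₁/d₁)^n + d₂ (q₂/d₂)^n ), so that g(n) = (1−n) S_n where S_n is the Rényi entropy of the two-sector state. If n_* ∈ ℝ satisfies d₁ (q₁/d₁)^{n_*} = d₂ (q₂/d₂)^{n_*}, then g is twice differentiable at n_* and its second derivative there equals (1/4) ( log( (d₁ q₂)/(d₂ q₁) ) )². -/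
/-!
With `a = log (q₁/d₁)` and `b = log (q₂/d₂)`, `g = log u` for `u n = d₁ e^{a n} + d₂ e^{b n}`, so
`g'' = (u'' u - u'²) / u² = d₁ e^{a n} d₂ e^{b n} (a - b)² / u²`. Where the two terms agree each is
`u / 2`, hence `g'' = (a - b)² / 4`, and `b - a = log ((d₁ q₂) / (d₂ q₁))`.
-/

open Real

namespace Real

section LogAddExp

variable {c₁ c₂ a b : ℝ}

theorem hasDerivAt_mul_exp_mul (c a x : ℝ) :
    HasDerivAt (fun y => c * exp (a * y)) (a * (c * exp (a * x))) x := by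
  simpa [mul_comm, mul_left_comm] using
    (((hasDerivAt_id x).const_mul a).exp).const_mul c

theorem hasDerivAt_log_add_exp (hc₁ : 0 < c₁) (hc₂ : 0 < c₂) (x : ℝ) :
    HasDerivAt (fun y => log (c₁ * exp (a * y) + c₂ * exp (b * y)))
      ((a * (c₁ * exp (a * x)) + b * (c₂ * exp (b * x))) /
        (c₁ * exp (a * x) + c₂ * exp (b * x))) x :=
  ((hasDerivAt_mul_exp_mul c₁ a x).add (hasDerivAt_mul_exp_mul c₂ b x)).log
    (add_pos (by positivity) (by positivity)).ne'

theorem contDiff_log_add_exp (hc₁ : 0 < c₁) (hc₂ : 0 < c₂) {n : WithTop ℕ∞} :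
    ContDiff ℝ n (fun y => log (c₁ * exp (a * y) + c₂ * exp (b * y))) :=
  ContDiff.log (by fun_prop) fun _ => by positivity

theorem iteratedDeriv_two_log_add_exp (hc₁ : 0 < c₁) (hc₂ : 0 < c₂) (x : ℝ) :
    iteratedDeriv 2 (fun y => log (c₁ * exp (a * y) + c₂ * exp (b * y))) x =
      c₁ * exp (a * x) * (c₂ * exp (b * x)) * (a - b) ^ 2 /
        (c₁ * exp (a * x) + c₂ * exp (b * x)) ^ 2 := by
  have hderiv : deriv (fun y => log (c₁ * exp (a * y) + c₂ * exp (b * y))) = fun y =>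
      (a * (c₁ * exp (a * y)) + b * (c₂ * exp (b * y))) /
        (c₁ * exp (a * y) + c₂ * exp (b * y)) :=
    funext fun y => (hasDerivAt_log_add_exp hc₁ hc₂ y).deriv
  have hnum : HasDerivAt (fun y => a * (c₁ * exp (a * y)) + b * (c₂ * exp (b * y)))
      (a * (a * (c₁ * exp (a * x))) + b * (b * (c₂ * exp (b * x)))) x :=
    ((hasDerivAt_mul_exp_mul c₁ a x).const_mul a).add
      ((hasDerivAt_mul_exp_mul c₂ b x).const_mul b)
  have hden : HasDerivAt (fun y => c₁ * exp (a * y) + c₂ * exp (b * y))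
      (a * (c₁ * exp (a * x)) + b * (c₂ * exp (b * x))) x :=
    (hasDerivAt_mul_exp_mul c₁ a x).add (hasDerivAt_mul_exp_mul c₂ b x)
  have hpos : 0 < c₁ * exp (a * x) + c₂ * exp (b * x) := by positivity
  rw [iteratedDeriv_succ, iteratedDeriv_one, hderiv, (hnum.fun_div hden hpos.ne').deriv]
  field_simp
  ring

theorem iteratedDeriv_two_log_add_exp_of_eq (hc₁ : 0 < c₁) (hc₂ : 0 < c₂) {x : ℝ}
    (hx : c₁ * exp (a * x) = c₂ * exp (b * x)) :
    iteratedDeriv 2 (fun y => log (c₁ * exp (a * y) + c₂ * exp (b * y))) x =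
      (a - b) ^ 2 / 4 := by
  have hpos : 0 < c₂ * exp (b * x) := by positivity
  rw [iteratedDeriv_two_log_add_exp hc₁ hc₂, hx]
  field_simp
  ring

end LogAddExp

end Real

theorem stmt18_general (d₁ d₂ q₁ q₂ : ℝ) (hd₁ : 0 < d₁) (hd₂ : 0 < d₂) (hq₁ : 0 < q₁)
    (hq₂ : 0 < q₂) (nstar : ℝ)
    (hstar : d₁ * (q₁ / d₁) ^ nstar = d₂ * (q₂ / d₂) ^ nstar) :
    letI g : ℝ → ℝ := fun x => Real.log (d₁ * (q₁ / d₁) ^ x + d₂ * (q₂ / d₂) ^ x)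
    ContDiffAt ℝ 2 g nstar ∧
    iteratedDeriv 2 g nstar = (1 / 4) * (Real.log ((d₁ * q₂) / (d₂ * q₁))) ^ 2 := by
  have hr₁ : 0 < q₁ / d₁ := div_pos hq₁ hd₁
  have hr₂ : 0 < q₂ / d₂ := div_pos hq₂ hd₂
  have hlog : log ((d₁ * q₂) / (d₂ * q₁)) = log (q₂ / d₂) - log (q₁ / d₁) := by
    rw [← log_div hr₂.ne' hr₁.ne']
    congr 1
    field_simp
  simp only [rpow_def_of_pos hr₁, rpow_def_of_pos hr₂] at hstar ⊢
  refine ⟨(contDiff_log_add_exp hd₁ hd₂).contDiffAt, ?_⟩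
  rw [iteratedDeriv_two_log_add_exp_of_eq hd₁ hd₂ hstar, hlog]
  ring

/-- curvature of the Rényi entropy at the phase transition. For positive
reals `d₁, d₂, q₁, q₂` with `q₁/d₁ ≠ q₂/d₂` and `g(n) = log(d₁ (q₁/d₁)^n + d₂ (q₂/d₂)^n)`
(so `g(n) = (1−n) S_n`), if `n_*` satisfies `d₁ (q₁/d₁)^{n_*} = d₂ (q₂/d₂)^{n_*}`, then
`g` is twice differentiable at `n_*` and `g''(n_*) = (1/4) (log((d₁ q₂)/(d₂ q₁)))²`. -/
theorem stmt18 (d₁ d₂ q₁ q₂ : ℝ) (hd₁ : 0 < d₁) (hd₂ : 0 < d₂) (hq₁ : 0 < q₁)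
    (hq₂ : 0 < q₂) (hne : q₁ / d₁ ≠ q₂ / d₂) (nstar : ℝ)
    (hstar : d₁ * (q₁ / d₁) ^ nstar = d₂ * (q₂ / d₂) ^ nstar) :
    letI g : ℝ → ℝ := fun x => Real.log (d₁ * (q₁ / d₁) ^ x + d₂ * (q₂ / d₂) ^ x)
    ContDiffAt ℝ 2 g nstar ∧
    iteratedDeriv 2 g nstar = (1 / 4) * (Real.log ((d₁ * q₂) / (d₂ * q₁))) ^ 2 :=
  stmt18_general d₁ d₂ q₁ q₂ hd₁ hd₂ hq₁ hq₂ nstar hstar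
end
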